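/- arXiv:1706.01189 — 5 statements merged into one kernel-verified Lean document; each statement's English description precedes it below -/
import Mathlib

section
/- Let F be the free group on generators x_1,...,x_q and let M : F → (ℤ⟨X_1,...,X_q⟩/J_k) be the Magnus expansion, the ring-quotient of the free noncommutative polynomial ring by the ideal J_k of polynomials of degree ≥ k, defined by M(x_i) = 1 + X_i. Then M(w) = 1 for every element w of the k-th term F_k of the lower central series of F. -/
noncomputable section
set_option maxHeartbeats 1000000

/-- The noncommutative monomial `X_{i_1} ⋯ X_{i_t}` in `ℤ⟨X_1,…,X_q⟩ = FreeAlgebra ℤ (Fin q)`. -/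
def ncMonomial (q : ℕ) (l : List (Fin q)) : FreeAlgebra ℤ (Fin q) :=
  (l.map (FreeAlgebra.ι ℤ)).prod

/-- The relation whose ring-quotient closure is the two-sided ideal `J_k`
generated by the monomials of degree `≥ k`. -/
def degRel (q k : ℕ) : FreeAlgebra ℤ (Fin q) → FreeAlgebra ℤ (Fin q) → Prop :=
  fun a b => b = 0 ∧ ∃ l : List (Fin q), k ≤ l.length ∧ a = ncMonomial q l

/-- The truncated polynomial ring `ℤ⟨X_1,…,X_q⟩/J_k`. -/
abbrev MagnusRing (q k : ℕ) : Type := RingQuot (degRel q k)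

/-- The image of the variable `X_i` in `ℤ⟨X_1,…,X_q⟩/J_k`. -/
def MagnusX (q k : ℕ) (i : Fin q) : MagnusRing q k :=
  RingQuot.mkRingHom (degRel q k) (FreeAlgebra.ι ℤ i)

namespace MagnusAux

variable (q k : ℕ)

def D (n : ℕ) : Submodule ℤ (MagnusRing q k) :=
  Submodule.span ℤ { x | ∃ l : List (Fin q), n ≤ l.length ∧
    x = RingQuot.mkRingHom (degRel q k) (ncMonomial q l) }

lemma ncMonomial_append (l l' : List (Fin q)) :
    ncMonomial q (l ++ l') = ncMonomial q l * ncMonomial q l' := by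
  simp [ncMonomial]

lemma mem_D_of (n : ℕ) (l : List (Fin q)) (h : n ≤ l.length) :
    RingQuot.mkRingHom (degRel q k) (ncMonomial q l) ∈ D q k n :=
  Submodule.subset_span ⟨l, h, rfl⟩

lemma D_mul_le (n m : ℕ) : D q k n * D q k m ≤ D q k (n + m) := by
  rw [D, D]
  erw [Submodule.span_mul_span]
  apply Submodule.span_le.2
  rintro x ⟨a, ⟨l, hl, rfl⟩, b, ⟨l', hl', rfl⟩, rfl⟩
  refine Submodule.subset_span ⟨l ++ l', ?_, ?_⟩
  · simp; omega
  · rw [ncMonomial_append, map_mul]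

lemma D_mul {n m : ℕ} {x y : MagnusRing q k} (hx : x ∈ D q k n) (hy : y ∈ D q k m) :
    x * y ∈ D q k (n + m) :=
  D_mul_le q k n m (Submodule.mul_mem_mul hx hy)

lemma D_antitone {n m : ℕ} (h : n ≤ m) : D q k m ≤ D q k n := by
  apply Submodule.span_le.2
  rintro x ⟨l, hl, rfl⟩
  exact Submodule.subset_span ⟨l, le_trans h hl, rfl⟩

lemma D_mul' {n m p : ℕ} (hp : p ≤ n + m) {x y : MagnusRing q k}
    (hx : x ∈ D q k n) (hy : y ∈ D q k m) : x * y ∈ D q k p := by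
  have h := D_mul q k hx hy
  exact D_antitone q k hp h

lemma one_mem_D_zero : (1 : MagnusRing q k) ∈ D q k 0 := by
  have := mem_D_of q k 0 [] (le_refl 0)
  simpa [ncMonomial] using this

lemma D_zero_top : D q k 0 = ⊤ := by
  rw [eq_top_iff]
  rintro x -
  obtain ⟨a, rfl⟩ := RingQuot.mkRingHom_surjective (degRel q k) x
  induction a using FreeAlgebra.induction with
  | grade0 r =>
      have h0 : (RingQuot.mkRingHom (degRel q k)) (algebraMap ℤ (FreeAlgebra ℤ (Fin q)) r)
          = r • (1 : MagnusRing q k) := by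
        simp
      rw [h0]
      exact Submodule.smul_mem _ r (one_mem_D_zero q k)
  | grade1 i =>
      have := mem_D_of q k 0 [i] (by simp)
      simpa [ncMonomial] using this
  | mul a b ha hb =>
      rw [map_mul]
      exact D_mul' q k (by omega) ha hb
  | add a b ha hb =>
      rw [map_add]
      exact Submodule.add_mem _ ha hb

lemma mul_right_mem_D {n : ℕ} {x : MagnusRing q k} (hx : x ∈ D q k n) (y : MagnusRing q k) :
    x * y ∈ D q k n := by
  have hy : y ∈ D q k 0 := by rw [D_zero_top]; trivial
  exact D_mul' q k (by omega) hx hy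

lemma D_k_eq_bot : D q k k = ⊥ := by
  rw [eq_bot_iff]
  apply Submodule.span_le.2
  rintro x ⟨l, hl, rfl⟩
  have h : degRel q k (ncMonomial q l) 0 := ⟨rfl, l, hl, rfl⟩
  have h0 : RingQuot.mkRingHom (degRel q k) (ncMonomial q l) =
      RingQuot.mkRingHom (degRel q k) 0 := RingQuot.mkRingHom_rel h
  simp [h0]

variable (M : FreeGroup (Fin q) →* MagnusRing q k)

lemma M_inv (g : FreeGroup (Fin q)) : M g * M g⁻¹ = 1 := by
  rw [← map_mul, mul_inv_cancel, map_one]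

def S (n : ℕ) : Subgroup (FreeGroup (Fin q)) where
  carrier := {w | M w - 1 ∈ D q k n}
  one_mem' := by simp
  mul_mem' := by
    intro a b ha hb
    have : M (a * b) - 1 = (M a - 1) * (M b - 1) + ((M a - 1) + (M b - 1)) := by
      rw [map_mul]
      simp only [sub_mul, mul_sub, mul_one, one_mul]
      abel
    rw [Set.mem_setOf_eq, this]
    exact Submodule.add_mem _ (D_mul' q k (Nat.le_add_right n n) ha hb) (Submodule.add_mem _ ha hb)
  inv_mem' := by
    intro a ha
    have : M a⁻¹ - 1 = -((M a - 1) * M a⁻¹) := by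
      have h := M_inv q k M a
      rw [sub_mul, one_mul, h]
      abel
    rw [Set.mem_setOf_eq, this]
    exact Submodule.neg_mem _ (mul_right_mem_D q k ha _)

lemma top_le_S_one : ∀ w : FreeGroup (Fin q),
    (∀ i, M (FreeGroup.of i) = 1 + MagnusX q k i) → w ∈ S q k M 1 := by
  intro w hM
  have hgen : ∀ i, FreeGroup.of i ∈ S q k M 1 := by
    intro i
    show M (FreeGroup.of i) - 1 ∈ D q k 1
    rw [hM i]
    have := mem_D_of q k 1 [i] (by simp)
    simpa [ncMonomial, MagnusX] using this
  induction w using FreeGroup.induction_on with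
  | C1 => exact (S q k M 1).one_mem
  | of i => exact hgen i
  | inv_of i _ => exact (S q k M 1).inv_mem (hgen i)
  | mul a b ha hb => exact (S q k M 1).mul_mem ha hb

end MagnusAux

/-- The Magnus expansion `M : F → ℤ⟨X_1,…,X_q⟩/J_k`, `x_i ↦ 1 + X_i`, sends every element
of the `k`-th lower central series term `F_k` to `1`. -/
theorem stmt0 (q k : ℕ) (hk : 1 ≤ k)
    (M : FreeGroup (Fin q) →* MagnusRing q k)
    (hM : ∀ i, M (FreeGroup.of i) = 1 + MagnusX q k i) :
    ∀ w ∈ (⊤ : Subgroup (FreeGroup (Fin q))).lowerCentralSeries (k - 1), M w = 1 := by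
  open MagnusAux commutatorElement in
  have key : ∀ n, (⊤ : Subgroup (FreeGroup (Fin q))).lowerCentralSeries n ≤ MagnusAux.S q k M (n + 1) := by
    intro n
    induction n with
    | zero =>
        rw [Subgroup.lowerCentralSeries_zero]
        intro w _
        exact MagnusAux.top_le_S_one q k M w hM
    | succ n ih =>
        rw [Subgroup.lowerCentralSeries_succ]
        apply Subgroup.commutator_le.2
        intro g hg h _
        have hg' : M g - 1 ∈ MagnusAux.D q k (n + 1) := ih hg
        have hh' : M h - 1 ∈ MagnusAux.D q k 1 := MagnusAux.top_le_S_one q k M h hM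
        show M ⁅g, h⁆ - 1 ∈ MagnusAux.D q k (n + 2)
    
        have hcomm : M ⁅g, h⁆ = M g * M h * M g⁻¹ * M h⁻¹ := by
          rw [commutatorElement_def]; simp [map_mul]
        have huv : M g * M h - M h * M g = (M g - 1) * (M h - 1) - (M h - 1) * (M g - 1) := by
          simp only [sub_mul, mul_sub, mul_one, one_mul]
          abel
        have hvu : M h * M g * (M g⁻¹ * M h⁻¹) = 1 := by
          have h1 := MagnusAux.M_inv q k M g
          have h2 := MagnusAux.M_inv q k M h
          calc M h * M g * (M g⁻¹ * M h⁻¹)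
              = M h * (M g * M g⁻¹) * M h⁻¹ := by simp only [mul_assoc]
            _ = 1 := by rw [h1, mul_one, h2]
        have heq : M ⁅g, h⁆ - 1 = (M g * M h - M h * M g) * (M g⁻¹ * M h⁻¹) := by
          rw [hcomm, sub_mul, hvu]
          simp only [mul_assoc]
        rw [heq]
        apply MagnusAux.mul_right_mem_D
        rw [huv]
        apply Submodule.sub_mem
        · exact MagnusAux.D_mul' q k (by omega) hg' hh'
        · exact MagnusAux.D_mul' q k (by omega) hh' hg'
  intro w hw
  have := key (k - 1) hw
  have hkk : k - 1 + 1 = k := Nat.succ_pred_eq_of_pos hk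
  rw [hkk] at this
  have hmem : M w - 1 ∈ MagnusAux.D q k k := this
  rw [MagnusAux.D_k_eq_bot, Submodule.mem_bot, sub_eq_zero] at hmem
  exact hmem
end
end

section
/- Let F be the free group of rank q and c_{i_1⋯i_k} : F → ℤ the Magnus coefficient functions. For any sequence (i_1,...,i_k) ∈ {1,...,q}^k, the map φ : F/F_k × F/F_k → ℤ given by φ(x,y) = Σ_{ℓ=1}^{k-1} c_{i_1⋯i_ℓ}(x) c_{i_{ℓ+1}⋯i_k}(y) is well-defined (each c_{i_1⋯i_ℓ} with ℓ < k factors through F/F_k) and is a group 2-cocycle on F/F_k with trivial ℤ coefficients. -/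
noncomputable section

/-- The 2-cochain `φ(x,y) = ∑_{ℓ=1}^{k-1} c_{i_1⋯i_ℓ}(x) c_{i_{ℓ+1}⋯i_k}(y)` built from
the Magnus coefficients. -/
def magnusPhi (q k : ℕ) (M : FreeGroup (Fin q) →* MagnusRing q k)
    (coeff : List (Fin q) → MagnusRing q k →+ ℤ) (I : List (Fin q))
    (x y : FreeGroup (Fin q)) : ℤ :=
  ∑ n ∈ Finset.Ico 1 k, coeff (I.take n) (M x) * coeff (I.drop n) (M y)

namespace Aux

open scoped commutatorElement

variable (q k : ℕ)

abbrev mk : FreeAlgebra ℤ (Fin q) →+* MagnusRing q k := RingQuot.mkRingHom (degRel q k)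

lemma ncMonomial_append (l₁ l₂ : List (Fin q)) :
    ncMonomial q (l₁ ++ l₂) = ncMonomial q l₁ * ncMonomial q l₂ := by
  simp [ncMonomial]

lemma ncMonomial_nil : ncMonomial q ([] : List (Fin q)) = 1 := rfl

lemma mk_mono_eq_zero {l : List (Fin q)} (h : k ≤ l.length) :
    mk q k (ncMonomial q l) = 0 := by
  have : mk q k (ncMonomial q l) = mk q k 0 :=
    RingQuot.mkRingHom_rel ⟨rfl, l, h, rfl⟩
  simpa using this

/-- span of monomials of degree ≥ n -/
def P (n : ℕ) : Submodule ℤ (MagnusRing q k) :=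
  Submodule.span ℤ {x | ∃ l : List (Fin q), n ≤ l.length ∧ x = mk q k (ncMonomial q l)}

lemma mono_mem_P {n : ℕ} {l : List (Fin q)} (h : n ≤ l.length) :
    mk q k (ncMonomial q l) ∈ P q k n :=
  Submodule.subset_span ⟨l, h, rfl⟩

lemma P_anti {m n : ℕ} (h : m ≤ n) : P q k n ≤ P q k m :=
  Submodule.span_mono (fun _ ⟨l, hl, he⟩ => ⟨l, h.trans hl, he⟩)

lemma mem_P_zero (a : MagnusRing q k) : a ∈ P q k 0 := by
  obtain ⟨x, rfl⟩ := RingQuot.mkRingHom_surjective (degRel q k) a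
  induction x using FreeAlgebra.induction with
  | grade0 r =>
      have : (mk q k) (algebraMap ℤ (FreeAlgebra ℤ (Fin q)) r)
          = r • (mk q k) (ncMonomial q []) := by
        simp [ncMonomial_nil, Algebra.algebraMap_eq_smul_one, map_one]
      rw [this]
      exact Submodule.smul_mem _ _ (mono_mem_P q k (Nat.zero_le _))
  | grade1 i =>
      have : FreeAlgebra.ι ℤ i = ncMonomial q [i] := by simp [ncMonomial]
      rw [this]; exact mono_mem_P q k (Nat.zero_le _)
  | mul a b ha hb =>
      rw [map_mul]
      refine Submodule.span_induction (p := fun x _ => x * (mk q k) b ∈ P q k 0)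
        ?_ ?_ ?_ ?_ ha
      · rintro x ⟨l, -, rfl⟩
        refine Submodule.span_induction (p := fun y _ => (mk q k) (ncMonomial q l) * y ∈ P q k 0)
          ?_ ?_ ?_ ?_ hb
        · rintro y ⟨l', -, rfl⟩
          rw [← map_mul, ← ncMonomial_append]
          exact mono_mem_P q k (Nat.zero_le _)
        · simp
        · intro y z _ _ hy hz; rw [mul_add]; exact Submodule.add_mem _ hy hz
        · intro r y _ hy; rw [mul_smul_comm]; exact Submodule.smul_mem _ _ hy
      · simp
      · intro x y _ _ hx hy; rw [add_mul]; exact Submodule.add_mem _ hx hy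
      · intro r x _ hx; rw [smul_mul_assoc]; exact Submodule.smul_mem _ _ hx
  | add a b ha hb => rw [map_add]; exact Submodule.add_mem _ ha hb

lemma P_mul {m n : ℕ} {a b : MagnusRing q k} (ha : a ∈ P q k m) (hb : b ∈ P q k n) :
    a * b ∈ P q k (m + n) := by
  refine Submodule.span_induction (p := fun x _ => x * b ∈ P q k (m + n)) ?_ ?_ ?_ ?_ ha
  · rintro x ⟨l, hl, rfl⟩
    refine Submodule.span_induction
      (p := fun y _ => (mk q k) (ncMonomial q l) * y ∈ P q k (m + n)) ?_ ?_ ?_ ?_ hb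
    · rintro y ⟨l', hl', rfl⟩
      rw [← map_mul, ← ncMonomial_append]
      exact mono_mem_P q k (by simp; omega)
    · simp
    · intro y z _ _ hy hz; rw [mul_add]; exact Submodule.add_mem _ hy hz
    · intro r y _ hy; rw [mul_smul_comm]; exact Submodule.smul_mem _ _ hy
  · simp
  · intro x y _ _ hx hy; rw [add_mul]; exact Submodule.add_mem _ hx hy
  · intro r x _ hx; rw [smul_mul_assoc]; exact Submodule.smul_mem _ _ hx

lemma P_mul_right {n : ℕ} {a : MagnusRing q k} (ha : a ∈ P q k n) (b : MagnusRing q k) :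
    a * b ∈ P q k n := by
  simpa using P_mul q k ha (mem_P_zero q k b)

lemma P_mul_left {n : ℕ} {a : MagnusRing q k} (b : MagnusRing q k) (ha : a ∈ P q k n) :
    b * a ∈ P q k n := by
  simpa using P_mul q k (mem_P_zero q k b) ha

lemma P_k_eq_zero {a : MagnusRing q k} (ha : a ∈ P q k k) : a = 0 := by
  have : P q k k ≤ ⊥ := Submodule.span_le.mpr (by
    rintro x ⟨l, hl, rfl⟩
    simp [Submodule.mem_bot, mk_mono_eq_zero q k hl])
  simpa using this ha


variable {q k : ℕ} (M : FreeGroup (Fin q) →* MagnusRing q k)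

/-- dimension subgroup -/
def D (n : ℕ) : Subgroup (FreeGroup (Fin q)) where
  carrier := {g | M g - 1 ∈ P q k n}
  one_mem' := by simp
  mul_mem' := by
    intro g h hg hh
    have : M (g * h) - 1 = (M g - 1) + (M h - 1) + (M g - 1) * (M h - 1) := by
      rw [map_mul]
      simp only [mul_sub, sub_mul, mul_one, one_mul]
      abel
    simp only [Set.mem_setOf_eq] at *
    rw [this]
    exact Submodule.add_mem _ (Submodule.add_mem _ hg hh)
      (P_anti q k (Nat.le_add_right n n) (P_mul q k hg hh))
  inv_mem' := by
    intro g hg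
    simp only [Set.mem_setOf_eq] at *
    have h1 : M g * M g⁻¹ = 1 := by rw [← map_mul, mul_inv_cancel, map_one]
    have : M g⁻¹ - 1 = -((M g - 1) * M g⁻¹) := by
      have : (M g - 1) * M g⁻¹ = M g * M g⁻¹ - M g⁻¹ := by rw [sub_mul, one_mul]
      rw [this, h1]; noncomm_ring
    rw [this]
    exact Submodule.neg_mem _ (P_mul_right q k hg _)

lemma mem_D_iff {n : ℕ} {g : FreeGroup (Fin q)} : g ∈ D M n ↔ M g - 1 ∈ P q k n := Iff.rfl

lemma commutator_mem_D (hM : ∀ i, M (FreeGroup.of i) = 1 + MagnusX q k i)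
    {m n : ℕ} {g h : FreeGroup (Fin q)} (hg : g ∈ D M m) (hh : h ∈ D M n) :
    ⁅g, h⁆ ∈ D M (m + n) := by
  rw [mem_D_iff] at *
  set u := M g; set v := M h
  have hu : u * M g⁻¹ = 1 := by rw [← map_mul, mul_inv_cancel, map_one]
  have hv : v * M h⁻¹ = 1 := by rw [← map_mul, mul_inv_cancel, map_one]
  have key : M ⁅g, h⁆ - 1 =
      ((u - 1) * (v - 1) - (v - 1) * (u - 1)) * (M g⁻¹ * M h⁻¹) := by
    have e1 : M ⁅g, h⁆ = u * v * (M g⁻¹ * M h⁻¹) := by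
      simp only [commutatorElement_def, map_mul, mul_assoc]; rfl
    have e2 : (v * u) * (M g⁻¹ * M h⁻¹) = 1 := by
      calc (v * u) * (M g⁻¹ * M h⁻¹) = v * (u * M g⁻¹) * M h⁻¹ := by noncomm_ring
      _ = 1 := by rw [hu, mul_one, hv]
    have e3 : (u - 1) * (v - 1) - (v - 1) * (u - 1) = u * v - v * u := by
      simp only [mul_sub, sub_mul, mul_one, one_mul]
      abel
    rw [e1, e3, sub_mul, e2]
  rw [key]
  exact P_mul_right q k
    (Submodule.sub_mem _ (P_mul q k hg hh) (by rw [add_comm]; exact P_mul q k hh hg)) _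

lemma mem_D_one (hM : ∀ i, M (FreeGroup.of i) = 1 + MagnusX q k i)
    (g : FreeGroup (Fin q)) : g ∈ D M 1 := by
  have : (⊤ : Subgroup (FreeGroup (Fin q))) ≤ D M 1 := by
    rw [← FreeGroup.closure_range_of (Fin q)]
    apply Subgroup.closure_le (D M 1) |>.mpr
    rintro x ⟨i, rfl⟩
    rw [SetLike.mem_coe, mem_D_iff, hM i]
    have : (1 : MagnusRing q k) + MagnusX q k i - 1 = MagnusX q k i := by noncomm_ring
    rw [this]
    have : MagnusX q k i = mk q k (ncMonomial q [i]) := by simp [MagnusX, ncMonomial]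
    rw [this]
    exact mono_mem_P q k (by simp)
  exact this trivial

lemma lcs_le_D (hM : ∀ i, M (FreeGroup.of i) = 1 + MagnusX q k i) (n : ℕ) :
    (⊤ : Subgroup (FreeGroup (Fin q))).lowerCentralSeries n ≤ D M (n + 1) := by
  induction n with
  | zero => exact fun g _ => mem_D_one M hM g
  | succ n ih =>
      rw [Subgroup.lowerCentralSeries_succ]
      apply Subgroup.closure_le (D M (n + 2)) |>.mpr
      rintro x ⟨p, hp, z, -, rfl⟩
      have : p * z * p⁻¹ * z⁻¹ = ⁅p, z⁆ := rfl
      rw [SetLike.mem_coe]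
      exact commutator_mem_D M hM (m := n + 1) (n := 1) (ih hp) (mem_D_one M hM z)

lemma M_eq_one_of_lcs (hM : ∀ i, M (FreeGroup.of i) = 1 + MagnusX q k i) (hk : 1 ≤ k)
    {w : FreeGroup (Fin q)} (hw : w ∈ (⊤ : Subgroup (FreeGroup (Fin q))).lowerCentralSeries (k - 1)) :
    M w = 1 := by
  have := lcs_le_D M hM (k - 1) hw
  rw [mem_D_iff, Nat.sub_add_cancel hk] at this
  have := P_k_eq_zero q k this
  rw [sub_eq_zero] at this
  exact this


variable (coeff : List (Fin q) → MagnusRing q k →+ ℤ)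

lemma coeff_mono
    (hcoeff : ∀ L L' : List (Fin q), L.length < k → L'.length < k →
      coeff L (mk q k (ncMonomial q L')) = if L = L' then 1 else 0)
    (L l : List (Fin q)) (hL : L.length < k) :
    coeff L (mk q k (ncMonomial q l)) = if L = l then 1 else 0 := by
  by_cases h : l.length < k
  · exact hcoeff L l hL h
  · rw [mk_mono_eq_zero q k (le_of_not_gt h), map_zero, if_neg]
    rintro rfl; omega

lemma split_sum (L l₁ l₂ : List (Fin q)) :
    (∑ n ∈ Finset.range (L.length + 1),
      (if L.take n = l₁ then (1:ℤ) else 0) * (if L.drop n = l₂ then 1 else 0))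
      = if L = l₁ ++ l₂ then 1 else 0 := by
  by_cases h : L = l₁ ++ l₂
  · subst h
    rw [if_pos rfl, Finset.sum_eq_single l₁.length]
    · simp [List.take_left, List.drop_left]
    · intro n hn hne
      rcases eq_or_ne ((l₁ ++ l₂).take n) l₁ with h1 | h1
      · exfalso
        apply hne
        have hlen := congrArg List.length h1
        rw [List.length_take, List.length_append] at hlen
        rw [Finset.mem_range, List.length_append] at hn
        omega
      · rw [if_neg h1, zero_mul]
    · intro hmem
      exfalso
      apply hmem
      rw [Finset.mem_range, List.length_append]
      omega
  · rw [if_neg h]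
    apply Finset.sum_eq_zero
    intro n _
    rcases eq_or_ne (L.take n) l₁ with h1 | h1
    · rcases eq_or_ne (L.drop n) l₂ with h2 | h2
      · exact absurd (by rw [← h1, ← h2, List.take_append_drop]) h
      · rw [if_neg h2, mul_zero]
    · rw [if_neg h1, zero_mul]

lemma coeff_mul
    (hcoeff : ∀ L L' : List (Fin q), L.length < k → L'.length < k →
      coeff L (mk q k (ncMonomial q L')) = if L = L' then 1 else 0)
    (L : List (Fin q)) (hL : L.length < k) (a b : MagnusRing q k) :
    coeff L (a * b) = ∑ n ∈ Finset.range (L.length + 1),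
      coeff (L.take n) a * coeff (L.drop n) b := by
  have hta : ∀ n, (L.take n).length < k := fun n => by
    rw [List.length_take]; omega
  have htd : ∀ n, (L.drop n).length < k := fun n => by
    rw [List.length_drop]; omega
  refine Submodule.span_induction (p := fun x _ => coeff L (x * b) =
      ∑ n ∈ Finset.range (L.length + 1), coeff (L.take n) x * coeff (L.drop n) b)
    ?_ ?_ ?_ ?_ (mem_P_zero q k a)
  · rintro x ⟨l₁, -, rfl⟩
    refine Submodule.span_induction (p := fun y _ =>
        coeff L ((mk q k) (ncMonomial q l₁) * y) =
        ∑ n ∈ Finset.range (L.length + 1),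
          coeff (L.take n) ((mk q k) (ncMonomial q l₁)) * coeff (L.drop n) y)
      ?_ ?_ ?_ ?_ (mem_P_zero q k b)
    · rintro y ⟨l₂, -, rfl⟩
      rw [← map_mul, ← ncMonomial_append, coeff_mono coeff hcoeff L _ hL]
      rw [← split_sum L l₁ l₂]
      apply Finset.sum_congr rfl
      intro n _
      rw [coeff_mono coeff hcoeff _ _ (hta n), coeff_mono coeff hcoeff _ _ (htd n)]
    · simp
    · intro y z _ _ hy hz
      rw [mul_add, map_add, hy, hz, ← Finset.sum_add_distrib]
      apply Finset.sum_congr rfl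
      intro n _
      rw [map_add, mul_add]
    · intro r y _ hy
      rw [mul_smul_comm, map_zsmul, smul_eq_mul, hy, Finset.mul_sum]
      apply Finset.sum_congr rfl
      intro n _
      rw [map_zsmul, smul_eq_mul]
      ring
  · simp
  · intro x y _ _ hx hy
    rw [add_mul, map_add, hx, hy, ← Finset.sum_add_distrib]
    apply Finset.sum_congr rfl
    intro n _
    rw [map_add, add_mul]
  · intro r x _ hx
    rw [smul_mul_assoc, map_zsmul, smul_eq_mul, hx, Finset.mul_sum]
    apply Finset.sum_congr rfl
    intro n _
    rw [map_zsmul, smul_eq_mul]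
    ring

lemma coeff_one
    (hcoeff : ∀ L L' : List (Fin q), L.length < k → L'.length < k →
      coeff L (mk q k (ncMonomial q L')) = if L = L' then 1 else 0)
    (L : List (Fin q)) (hL : L.length < k) :
    coeff L (1 : MagnusRing q k) = if L = [] then 1 else 0 := by
  have : (1 : MagnusRing q k) = mk q k (ncMonomial q []) := by
    rw [ncMonomial_nil, map_one]
  rw [this, coeff_mono coeff hcoeff _ _ hL]

lemma coeff_nil_M (hk : 1 ≤ k)
    (hM : ∀ i, M (FreeGroup.of i) = 1 + MagnusX q k i)
    (hcoeff : ∀ L L' : List (Fin q), L.length < k → L'.length < k →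
      coeff L (mk q k (ncMonomial q L')) = if L = L' then 1 else 0)
    (g : FreeGroup (Fin q)) : coeff [] (M g) = 1 := by
  have h1 : M g - 1 ∈ P q k 1 := mem_D_one M hM g
  have h2 : coeff [] (M g - 1) = 0 := by
    have hker : P q k 1 ≤ LinearMap.ker (coeff ([] : List (Fin q))).toIntLinearMap := by
      apply Submodule.span_le.mpr
      rintro x ⟨l, hl, rfl⟩
      rw [SetLike.mem_coe, LinearMap.mem_ker]
      show coeff [] ((mk q k) (ncMonomial q l)) = 0
      rw [coeff_mono coeff hcoeff _ _ (by simp; omega), if_neg]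
      rintro rfl
      simp at hl
    exact hker h1
  have := map_sub (coeff ([] : List (Fin q))) (M g) 1
  rw [h2, coeff_one coeff hcoeff _ (by simp; omega), if_pos rfl] at this
  omega


lemma coeff_take_mul
    (hcoeff : ∀ L L' : List (Fin q), L.length < k → L'.length < k →
      coeff L (mk q k (ncMonomial q L')) = if L = L' then 1 else 0)
    {I : List (Fin q)} (hI : I.length = k) {n : ℕ} (hn : n < k) (a b : MagnusRing q k) :
    coeff (I.take n) (a * b) = ∑ t ∈ Finset.range (n + 1),
      coeff (I.take t) a * coeff ((I.drop t).take (n - t)) b := by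
  have hlen : (I.take n).length = n := by rw [List.length_take, hI]; omega
  rw [coeff_mul coeff hcoeff _ (by omega) a b, hlen]
  apply Finset.sum_congr rfl
  intro t ht
  rw [Finset.mem_range] at ht
  rw [List.take_take, min_eq_left (by omega), List.drop_take]

lemma coeff_drop_mul
    (hcoeff : ∀ L L' : List (Fin q), L.length < k → L'.length < k →
      coeff L (mk q k (ncMonomial q L')) = if L = L' then 1 else 0)
    (hk : 1 ≤ k) {I : List (Fin q)} (hI : I.length = k) {n : ℕ} (hn : 1 ≤ n) (a b : MagnusRing q k) :
    coeff (I.drop n) (a * b) = ∑ j ∈ Finset.range (k - n + 1),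
      coeff ((I.drop n).take j) a * coeff (I.drop (n + j)) b := by
  have hlen : (I.drop n).length = k - n := by rw [List.length_drop, hI]
  rw [coeff_mul coeff hcoeff _ (by omega) a b, hlen]
  apply Finset.sum_congr rfl
  intro j _
  rw [List.drop_drop]

end Aux

/-- For a sequence `I = (i_1,…,i_k)`, the map
`φ(x,y) = ∑_{ℓ=1}^{k-1} c_{i_1⋯i_ℓ}(x) c_{i_{ℓ+1}⋯i_k}(y)` is well defined on
`F/F_k × F/F_k` (each Magnus coefficient of length `< k` is invariant under right
multiplication by `F_k`) and is a group 2-cocycle with trivial `ℤ` coefficients. -/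
theorem stmt8 (q k : ℕ) (hk : 1 ≤ k)
    (M : FreeGroup (Fin q) →* MagnusRing q k)
    (hM : ∀ i, M (FreeGroup.of i) = 1 + MagnusX q k i)
    (coeff : List (Fin q) → MagnusRing q k →+ ℤ)
    (hcoeff : ∀ L L' : List (Fin q), L.length < k → L'.length < k →
      coeff L (RingQuot.mkRingHom (degRel q k) (ncMonomial q L')) =
        if L = L' then 1 else 0)
    (I : List (Fin q)) (hI : I.length = k) :
    (∀ L : List (Fin q), L.length < k → ∀ x : FreeGroup (Fin q),
        ∀ w ∈ Subgroup.lowerCentralSeries (⊤ : Subgroup (FreeGroup (Fin q))) (k - 1),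
          coeff L (M (x * w)) = coeff L (M x)) ∧
    (∀ x y z : FreeGroup (Fin q),
        magnusPhi q k M coeff I y z - magnusPhi q k M coeff I (x * y) z
          + magnusPhi q k M coeff I x (y * z) - magnusPhi q k M coeff I x y = 0) := by
  have hcoeff' : ∀ L L' : List (Fin q), L.length < k → L'.length < k →
      coeff L (Aux.mk q k (ncMonomial q L')) = if L = L' then 1 else 0 := hcoeff
  constructor
  · intro L hL x w hw
    rw [map_mul, Aux.M_eq_one_of_lcs M hM hk hw, mul_one]
  · intro x y z
    set A : ℕ → ℤ := fun n => coeff (I.take n) (M x) with hA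
    set Bf : ℕ → ℕ → ℤ := fun n t => coeff ((I.drop n).take (t - n)) (M y) with hB
    set C : ℕ → ℤ := fun n => coeff (I.drop n) (M z) with hC
    have hA0 : A 0 = 1 := by
      rw [hA]
      simp only [List.take_zero]
      exact Aux.coeff_nil_M M coeff hk hM hcoeff' x
    have hBnn : ∀ n, Bf n n = 1 := by
      intro n
      rw [hB]
      simp only [Nat.sub_self, List.take_zero]
      exact Aux.coeff_nil_M M coeff hk hM hcoeff' y
    have hCk : C k = 1 := by
      rw [hC]
      simp only [← hI, List.drop_length]
      exact Aux.coeff_nil_M M coeff hk hM hcoeff' z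
    have hBk : ∀ n, Bf n k = coeff (I.drop n) (M y) := by
      intro n
      rw [hB]
      simp only
      rw [List.take_of_length_le (by rw [List.length_drop, hI])]
    -- rewrite the four phi's
    have hphi_yz : magnusPhi q k M coeff I y z = ∑ n ∈ Finset.Ico 1 k, Bf 0 n * C n := by
      unfold magnusPhi
      apply Finset.sum_congr rfl
      intro n _
      rw [hB, hC]
      simp
    have hphi_xyz : magnusPhi q k M coeff I (x * y) z =
        ∑ n ∈ Finset.Ico 1 k, (∑ t ∈ Finset.range (n + 1), A t * Bf t n) * C n := by
      unfold magnusPhi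
      apply Finset.sum_congr rfl
      intro n hn
      rw [Finset.mem_Ico] at hn
      rw [map_mul, Aux.coeff_take_mul coeff hcoeff' hI hn.2 (M x) (M y)]
    have hphi_x_yz : magnusPhi q k M coeff I x (y * z) =
        ∑ n ∈ Finset.Ico 1 k, A n * ∑ j ∈ Finset.range (k - n + 1),
          Bf n (n + j) * C (n + j) := by
      unfold magnusPhi
      apply Finset.sum_congr rfl
      intro n hn
      rw [Finset.mem_Ico] at hn
      rw [map_mul, Aux.coeff_drop_mul coeff hcoeff' hk hI hn.1 (M y) (M z)]
      congr 1
      apply Finset.sum_congr rfl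
      intro j _
      rw [hB, hC]
      simp only [Nat.add_sub_cancel_left]
    have hphi_xy : magnusPhi q k M coeff I x y =
        ∑ n ∈ Finset.Ico 1 k, A n * Bf n k := by
      unfold magnusPhi
      apply Finset.sum_congr rfl
      intro n _
      rw [hBk]
    -- split the inner sums
    have e2 : (∑ n ∈ Finset.Ico 1 k, (∑ t ∈ Finset.range (n + 1), A t * Bf t n) * C n) =
        (∑ n ∈ Finset.Ico 1 k, Bf 0 n * C n)
        + (∑ n ∈ Finset.Ico 1 k, (∑ t ∈ Finset.Ico 1 n, A t * Bf t n) * C n)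
        + ∑ n ∈ Finset.Ico 1 k, A n * C n := by
      rw [← Finset.sum_add_distrib, ← Finset.sum_add_distrib]
      apply Finset.sum_congr rfl
      intro n hn
      rw [Finset.mem_Ico] at hn
      rw [Finset.range_eq_Ico, Finset.sum_eq_sum_Ico_succ_bot (by omega),
        Finset.sum_Ico_succ_top (by omega : 1 ≤ n), hA0, hBnn, one_mul, mul_one]
      ring
    have e3 : (∑ n ∈ Finset.Ico 1 k, A n * ∑ j ∈ Finset.range (k - n + 1),
          Bf n (n + j) * C (n + j)) =
        (∑ n ∈ Finset.Ico 1 k, A n * C n)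
        + (∑ n ∈ Finset.Ico 1 k, A n * ∑ t ∈ Finset.Ico (n + 1) k, Bf n t * C t)
        + ∑ n ∈ Finset.Ico 1 k, A n * Bf n k := by
      rw [← Finset.sum_add_distrib, ← Finset.sum_add_distrib]
      apply Finset.sum_congr rfl
      intro n hn
      rw [Finset.mem_Ico] at hn
      have hkn : 1 ≤ k - n := by omega
      rw [Finset.range_eq_Ico, Finset.sum_eq_sum_Ico_succ_bot (by omega),
        Finset.sum_Ico_succ_top (by omega : 1 ≤ k - n)]
      have h0 : Bf n (n + 0) * C (n + 0) = C n := by rw [Nat.add_zero, hBnn, one_mul]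
      have htop : Bf n (n + (k - n)) * C (n + (k - n)) = Bf n k := by
        have : n + (k - n) = k := by omega
        rw [this, hCk, mul_one]
      have hmid : (∑ j ∈ Finset.Ico 1 (k - n), Bf n (n + j) * C (n + j)) =
          ∑ t ∈ Finset.Ico (n + 1) k, Bf n t * C t := by
        rw [Finset.sum_Ico_eq_sum_range, Finset.sum_Ico_eq_sum_range]
        have hcard : k - n - 1 = k - (n + 1) := by omega
        rw [hcard]
        apply Finset.sum_congr rfl
        intro i _
        have : n + (1 + i) = n + 1 + i := by omega
        rw [this]
      rw [h0, htop, hmid]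
      ring
    -- the key exchange of double sums
    have hTT : (∑ n ∈ Finset.Ico 1 k, (∑ t ∈ Finset.Ico 1 n, A t * Bf t n) * C n) =
        ∑ n ∈ Finset.Ico 1 k, A n * ∑ t ∈ Finset.Ico (n + 1) k, Bf n t * C t := by
      calc (∑ n ∈ Finset.Ico 1 k, (∑ t ∈ Finset.Ico 1 n, A t * Bf t n) * C n)
          = ∑ n ∈ Finset.Ico 1 k, ∑ t ∈ Finset.Ico 1 n, A t * Bf t n * C n := by
            apply Finset.sum_congr rfl
            intro n _
            rw [Finset.sum_mul]
        _ = ∑ n ∈ Finset.Ico 1 k, ∑ t ∈ Finset.Ico (n + 1) k, A n * Bf n t * C t :=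
            (Finset.sum_Ico_Ico_comm' 1 k fun i j => A i * Bf i j * C j).symm
        _ = ∑ n ∈ Finset.Ico 1 k, A n * ∑ t ∈ Finset.Ico (n + 1) k, Bf n t * C t := by
            apply Finset.sum_congr rfl
            intro n _
            rw [Finset.mul_sum]
            apply Finset.sum_congr rfl
            intro t _
            ring
    rw [hphi_yz, hphi_xyz, hphi_x_yz, hphi_xy, e2, e3, hTT]
    ring
end
end

section
/- Equip the set of finite sequences from {1,...,q} with the lexicographical order. Call a sequence I = (i_1, i_2, ..., i_k) standard if I < (i_s, i_{s+1}, ..., i_k) for every 2 ≤ s ≤ k. Then the number of standard sequences of length k equals N_k = (1/k) Σ_{d|k} μ(k/d) q^d. -/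
set_option linter.unusedSectionVars false
set_option maxHeartbeats 1000000

namespace StdAux

variable {α : Type*} [LinearOrder α]

/-- general Lyndon predicate -/
def Lyn (l : List α) : Prop :=
  ∀ s, 0 < s → s < l.length → List.Lex (· < ·) l (l.drop s)

/-- aperiodic (primitive) word -/
def Aper (l : List α) : Prop :=
  ∀ s, 0 < s → s < l.length → l.rotate s ≠ l

theorem lex_append_of_lex_of_le {r : α → α → Prop} :
    ∀ {u v : List α}, List.Lex r u v → v.length ≤ u.length → ∀ z, List.Lex r u (v ++ z)
  | _, _, List.Lex.nil, h, z => by simp at h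
  | _, _, List.Lex.rel h, _, z => List.Lex.rel h
  | _::_, _::_, List.Lex.cons h, hl, z =>
      List.Lex.cons (lex_append_of_lex_of_le h (Nat.succ_le_succ_iff.mp hl) z)

theorem lex_of_take_eq_of_lt :
    ∀ (j : ℕ) {u v : List α} (hj : j < u.length) (hj' : j < v.length),
      u.take j = v.take j → u.get ⟨j, hj⟩ < v.get ⟨j, hj'⟩ → List.Lex (· < ·) u v
  | 0, a::u, b::v, _, _, _, hlt => List.Lex.rel hlt
  | (j+1), a::u, b::v, hj, hj', ht, hlt => by
      simp only [List.take_succ_cons, List.cons.injEq] at ht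
      exact ht.1 ▸ List.Lex.cons (lex_of_take_eq_of_lt j (Nat.succ_lt_succ_iff.mp hj)
        (Nat.succ_lt_succ_iff.mp hj') ht.2 hlt)

theorem lex_cases : ∀ {u v : List α}, List.Lex (· < ·) u v →
    u <+: v ∨ ∃ j, ∃ (hj : j < u.length) (hj' : j < v.length),
      u.take j = v.take j ∧ u.get ⟨j, hj⟩ < v.get ⟨j, hj'⟩
  | _, _, List.Lex.nil => Or.inl (List.nil_prefix)
  | a::u, b::v, List.Lex.rel h => Or.inr ⟨0, Nat.succ_pos _, Nat.succ_pos _, rfl, h⟩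
  | a::u, _::v, List.Lex.cons h => by
      rcases lex_cases h with hp | ⟨j, hj, hj', ht, hlt⟩
      · exact Or.inl ((List.cons_prefix_cons.mpr ⟨rfl, hp⟩))
      · exact Or.inr ⟨j+1, Nat.succ_lt_succ hj, Nat.succ_lt_succ hj',
          by simpa using ht, hlt⟩

theorem lex_append_left_cancel : ∀ (w : List α) {a b : List α},
    List.Lex (· < ·) (w ++ a) (w ++ b) → List.Lex (· < ·) a b
  | [], _, _, h => h
  | x::w, a, b, h => by
      cases h with
      | rel h => exact absurd h (lt_irrefl _)
      | cons h => exact lex_append_left_cancel w h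


-- Lemma A
theorem lyn_lex_rotate {v : List α} (hl : Lyn v) {s : ℕ} (hs : 0 < s) (hs' : s < v.length) :
    List.Lex (· < ·) v (v.rotate s) := by
  rw [List.rotate_eq_drop_append_take hs'.le]
  exact lex_append_of_lex_of_le (hl s hs hs') (by simpa using Nat.sub_le _ _) _

theorem lyn_aper {v : List α} (hl : Lyn v) : Aper v := by
  intro s hs hs' he
  have h1 := lyn_lex_rotate hl hs hs'
  rw [he] at h1
  exact (List.Lex.asymm (· < ·)).asymm v v h1 h1

-- Lemma B
theorem lyn_of_min {v : List α} (haper : Aper v)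
    (hmin : ∀ i, ¬ List.Lex (· < ·) (v.rotate i) v) : Lyn v := by
  intro s hs hs'
  set k := v.length with hk
  by_contra hcon
  rcases (trichotomous (r := List.Lex ((· < ·) : α → α → Prop))) v (v.drop s) with h | h | h
  · exact hcon h
  · have := congrArg List.length h
    simp [hk] at this
    omega
  · -- Lex (v.drop s) v
    rcases lex_cases h with hp | ⟨j, hj, hj', ht, hlt⟩
    · -- u := v.drop s is a prefix of v
      set u := v.drop s with hu
      set t := v.take s with hT
      set p := k - s with hp'
      have hul : u.length = p := by simp [hu, hp', hk]
      have hvut : v.rotate s = u ++ t := List.rotate_eq_drop_append_take hs'.le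
      have hvue : v = u ++ v.drop p := by
        have := List.prefix_iff_eq_take.mp hp
        conv_lhs => rw [← List.take_append_drop u.length v, ← this, hul]
      set e := v.drop p with he
      have hne : v.rotate s ≠ v := haper s hs hs'
      -- Lex (u ++ e) (u ++ t)
      have h2 : List.Lex (· < ·) (u ++ e) (u ++ t) := by
        rcases (trichotomous (r := List.Lex ((· < ·) : α → α → Prop))) (u ++ e) (u ++ t) with h2 | h2 | h2
        · exact h2
        · exact absurd (by rw [hvut, ← h2, ← hvue]) hne
        · exact absurd (by rw [hvut, hvue]; exact h2 : List.Lex (· < ·) (v.rotate s) v) (hmin s)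
      have h3 : List.Lex (· < ·) e t := lex_append_left_cancel u h2
      rcases lex_cases h3 with hp3 | ⟨j, hj, hj', ht3, hlt3⟩
      · -- e <+: t with equal lengths ⇒ e = t ⇒ contradiction with hne
        have hel : e.length = t.length := by
          simp [he, hT, hp', Nat.min_eq_left (le_of_lt hs')]
          omega
        have : e = t := hp3.eq_of_length hel
        exact hne (by rw [hvut, ← this, ← hvue])
      · -- index case: rotate v p < v
        have hjv : j < v.length := lt_of_lt_of_le hj' (by simp [hT])
        have htj : t.take j = v.take j := by
          rw [hT, List.take_take, min_eq_left]
          have := hj'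
          simp only [hT, List.length_take] at this
          omega
        have htg : t.get ⟨j, hj'⟩ = v.get ⟨j, hjv⟩ := by
          simp only [hT, List.get_eq_getElem, List.getElem_take]
        have hpn : 0 < p := by omega
        have hpk : p < k := by omega
        have hrot : v.rotate p = e ++ u := by
          rw [List.rotate_eq_drop_append_take hpk.le, ← he]
          congr 1
          conv_rhs => rw [List.prefix_iff_eq_take.mp hp, hul]
        apply hmin p
        rw [hrot]
        have hje : j < (e ++ u).length := by
          simp only [List.length_append]
          omega
        apply lex_of_take_eq_of_lt j hje hjv
        · rw [List.take_append_of_le_length hj.le, ht3, htj]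
        · have : (e ++ u).get ⟨j, hje⟩ = e.get ⟨j, hj⟩ := by
            simp [List.getElem_append_left hj]
          rw [this, ← htg]
          exact hlt3
    · -- index case directly: rotate v s < v
      apply hmin s
      rw [List.rotate_eq_drop_append_take hs'.le]
      have hje : j < (v.drop s ++ v.take s).length := by simp; omega
      apply lex_of_take_eq_of_lt j hje hj'
      · rw [List.take_append_of_le_length hj.le, ht]
      · have : (v.drop s ++ v.take s).get ⟨j, hje⟩ = (v.drop s).get ⟨j, hj⟩ := by
          simp [List.getElem_append_left hj]
        rw [this]
        exact hlt


/-- `npow u m = u ++ u ++ ⋯ ++ u` (`m` times) -/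
def npow (u : List α) : ℕ → List α
  | 0 => []
  | m + 1 => u ++ npow u m

@[simp] theorem length_npow (u : List α) : ∀ m, (npow u m).length = m * u.length
  | 0 => by simp [npow]
  | m + 1 => by simp [npow, length_npow u m, Nat.succ_mul]; ring

theorem npow_append_take (u : List α) {s : ℕ} (hs : s ≤ u.length) :
    ∀ m, npow u m ++ u.take s = u.take s ++ npow (u.rotate s) m
  | 0 => by simp [npow]
  | m + 1 => by
    rw [npow, List.append_assoc, npow_append_take u hs m,
      List.rotate_eq_drop_append_take hs, npow]
    conv_rhs => rw [← List.append_assoc, ← List.append_assoc]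
    rw [List.take_append_drop, List.append_assoc]

theorem rotate_npow (u : List α) {s : ℕ} (hs : s ≤ u.length) :
    ∀ m, (npow u m).rotate s = npow (u.rotate s) m
  | 0 => by simp [npow]
  | m + 1 => by
    have hs' : s ≤ (npow u (m+1)).length := by
      simp [Nat.succ_mul]
      omega
    rw [List.rotate_eq_drop_append_take hs', npow, List.rotate_eq_drop_append_take hs]
    rw [List.drop_append_of_le_length hs, List.take_append_of_le_length hs,
      List.append_assoc, npow_append_take u hs m,
      List.rotate_eq_drop_append_take hs, npow, List.append_assoc]

theorem take_npow (u : List α) (m : ℕ) (hm : 0 < m) : (npow u m).take u.length = u := by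
  cases m with
  | zero => omega
  | succ m => rw [npow, List.take_left]

theorem npow_injective {u w : List α} (h : u.length = w.length) {m : ℕ} (hm : 0 < m)
    (he : npow u m = npow w m) : u = w := by
  have := congrArg (List.take u.length) he
  rwa [take_npow u m hm, h, take_npow w m hm] at this

/-- every word whose rotation by `d` is itself, with `d ∣ length`, is a `d`-power -/
theorem eq_npow_of_rotate : ∀ (m : ℕ) (x : List α) (d : ℕ), 0 < d → x.length = m * d →
    x.rotate d = x → x = npow (x.take d) m
  | 0, x, d, hd, hlen, _ => by
    simp at hlen
    simp [npow, hlen]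
  | 1, x, d, hd, hlen, _ => by
    simp at hlen
    simp [npow, List.take_of_length_le hlen.le]
  | (m+2), x, d, hd, hlen, hrot => by
    have hdx : d ≤ x.length := by rw [hlen]; nlinarith
    set t := x.take d with hT
    set y := x.drop d with hy
    have htl : t.length = d := by rw [hT, List.length_take, Nat.min_eq_left hdx]
    have hyl : y.length = (m+1) * d := by
      rw [hy, List.length_drop, hlen]
      ring_nf
      omega
    have hds : d ≤ y.length := by rw [hyl]; nlinarith
    have hE : y ++ t = t ++ y := by
      have h1 : y ++ t = x := by
        rw [← List.rotate_eq_drop_append_take hdx]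
        exact hrot
      rw [h1, hT, hy]
      exact (List.take_append_drop d x).symm
    have hyt : y.take d = t := by
      have h2 := congrArg (List.take d) hE
      rwa [List.take_append_of_le_length hds, List.take_left' htl] at h2
    have hyd : y = t ++ y.drop d := by
      conv_lhs => rw [← List.take_append_drop d y, hyt]
    have hyrot : y.rotate d = y := by
      have h2 : t ++ (y.drop d ++ t) = t ++ y := by
        rw [← List.append_assoc, ← hyd]
        exact hE
      rw [List.rotate_eq_drop_append_take hds, hyt]
      exact List.append_cancel_left h2
    have hrec := eq_npow_of_rotate (m+1) y d hd hyl hyrot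
    rw [hyt] at hrec
    have hxty : x = t ++ y := by rw [hT, hy]; exact (List.take_append_drop d x).symm
    show x = t ++ npow t (m+1)
    rw [← hrec]
    exact hxty


theorem exists_per {x : List α} (hx : 0 < x.length) : ∃ s, 0 < s ∧ x.rotate s = x :=
  ⟨x.length, hx, x.rotate_length⟩

open Classical in
/-- minimal positive rotation-period -/
noncomputable def minper (x : List α) : ℕ :=
  if h : 0 < x.length then Nat.find (exists_per h) else 0

section minper
variable {x : List α} (hx : 0 < x.length)
include hx

open Classical in
theorem minper_spec : 0 < minper x ∧ x.rotate (minper x) = x := by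
  rw [minper, dif_pos hx]
  exact Nat.find_spec (exists_per hx)

theorem minper_pos : 0 < minper x := (minper_spec hx).1
theorem rotate_minper : x.rotate (minper x) = x := (minper_spec hx).2

open Classical in
theorem minper_min {s : ℕ} (h1 : 0 < s) (h2 : s < minper x) : x.rotate s ≠ x := by
  rw [minper, dif_pos hx] at h2
  have := Nat.find_min _ h2
  simpa [h1] using this

open Classical in
theorem minper_le : minper x ≤ x.length := by
  rw [minper, dif_pos hx]
  exact Nat.find_min' _ ⟨hx, x.rotate_length⟩

theorem rotate_minper_mul (a : ℕ) : x.rotate (minper x * a) = x := by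
  induction a with
  | zero => simp
  | succ a ih =>
    rw [Nat.mul_succ, ← List.rotate_rotate, ih, rotate_minper hx]

theorem minper_dvd {s : ℕ} (h : x.rotate s = x) : minper x ∣ s := by
  set d := minper x
  have h1 : x.rotate (s % d) = x := by
    have h2 := congrArg (fun l => l.rotate (s % d)) (rotate_minper_mul hx (s / d))
    simp only [List.rotate_rotate] at h2
    rw [Nat.div_add_mod s d, h] at h2
    exact h2.symm
  by_contra hnd
  have hmod : 0 < s % d := Nat.pos_of_ne_zero fun h0 => hnd (Nat.dvd_of_mod_eq_zero h0)
  exact minper_min hx hmod (Nat.mod_lt _ (minper_pos hx)) h1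

theorem minper_dvd_length : minper x ∣ x.length :=
  minper_dvd hx x.rotate_length

theorem eq_npow_minper : x = npow (x.take (minper x)) (x.length / minper x) := by
  refine eq_npow_of_rotate _ x (minper x) (minper_pos hx) ?_ (rotate_minper hx)
  rw [Nat.div_mul_cancel (minper_dvd_length hx)]

theorem length_take_minper : (x.take (minper x)).length = minper x := by
  rw [List.length_take, Nat.min_eq_left (minper_le hx)]

theorem aper_take_minper : Aper (x.take (minper x)) := by
  intro s hs hs' heq
  rw [length_take_minper hx] at hs'
  apply minper_min hx hs hs'
  conv_lhs => rw [eq_npow_minper hx,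
    rotate_npow _ ((length_take_minper hx).symm ▸ hs'.le), heq]
  exact (eq_npow_minper hx).symm

end minper

theorem minper_npow {u : List α} (hu : 0 < u.length) (ha : Aper u) {m : ℕ} (hm : 0 < m) :
    minper (npow u m) = u.length := by
  set x := npow u m with hxd
  have hx : 0 < x.length := by
    simp only [hxd, length_npow]
    exact Nat.mul_pos hm hu
  have h1 : x.rotate u.length = x := by
    rw [hxd, rotate_npow u le_rfl, List.rotate_length]
  have h2 : minper x ≤ u.length := by
    have := minper_dvd hx h1
    exact Nat.le_of_dvd hu this
  rcases eq_or_lt_of_le h2 with h | h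
  · exact h
  · exfalso
    have h3 := rotate_minper hx
    rw [hxd, rotate_npow u h.le] at h3
    have h4 : u.rotate (minper x) = u :=
      npow_injective (by simp) hm h3
    exact ha _ (minper_pos hx) h h4


/-- arithmetic helper -/
theorem mod_helper {a b n : ℕ} (ha : a < n) (hb : b < n) (h : (b + (n - a)) % n = 0) :
    a = b := by
  obtain ⟨c, hc⟩ := Nat.dvd_of_mod_eq_zero h
  rcases c with _ | _ | c
  · omega
  · omega
  · have : n * (c + 1 + 1) ≥ 2 * n := by nlinarith
    omega

theorem aper_mod_eq_zero {x : List α} (hx : 0 < x.length) (ha : Aper x) {s : ℕ}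
    (h : x.rotate s = x) : s % x.length = 0 := by
  by_contra h0
  have h1 : x.rotate (s % x.length) = x := by rw [List.rotate_mod]; exact h
  exact ha _ (Nat.pos_of_ne_zero h0) (Nat.mod_lt _ hx) h1

theorem aper_rotate_inj {x : List α} (hx : 0 < x.length) (ha : Aper x) {i j : ℕ}
    (hi : i < x.length) (hj : j < x.length) (h : x.rotate i = x.rotate j) : i = j := by
  have h1 : x = (x.rotate j).rotate (x.length - i % x.length) := by
    rw [← List.length_rotate x j]
    exact List.rotate_eq_iff.mp h
  rw [List.rotate_rotate] at h1
  have h2 := aper_mod_eq_zero hx ha h1.symm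
  rw [Nat.mod_eq_of_lt hi] at h2
  exact mod_helper hi hj h2

theorem aper_rotate {x : List α} (hx : 0 < x.length) (ha : Aper x) (i : ℕ) :
    Aper (x.rotate i) := by
  intro s hs hs' heq
  rw [List.length_rotate] at hs'
  rw [List.rotate_rotate] at heq
  have e1 : x.rotate ((i + s) % x.length) = x.rotate (i % x.length) := by
    rw [List.rotate_mod, List.rotate_mod]; exact heq
  have e2 := aper_rotate_inj hx ha (Nat.mod_lt _ hx) (Nat.mod_lt _ hx) e1
  have e3 : i + s ≡ i + 0 [MOD x.length] := by
    simpa [Nat.ModEq] using e2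
  have e4 : x.length ∣ s := (Nat.modEq_zero_iff_dvd).mp (Nat.ModEq.add_left_cancel' i e3)
  exact absurd (Nat.le_of_dvd hs e4) (by omega)


/-- Bijection: Lyndon words × rotations ≃ aperiodic words -/
theorem lyn_prod_bij {k : ℕ} (hk : 0 < k) :
    Function.Bijective (fun p : {I : List α // I.length = k ∧ Lyn I} × Fin k =>
      (⟨p.1.1.rotate p.2.1, by rw [List.length_rotate]; exact p.1.2.1,
        aper_rotate (by rw [p.1.2.1]; exact hk) (lyn_aper p.1.2.2) p.2.1⟩ :
        {x : List α // x.length = k ∧ Aper x})) := by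
  constructor
  · rintro ⟨⟨w, hwl, hwL⟩, ⟨i, hi⟩⟩ ⟨⟨w', hwl', hwL'⟩, ⟨i', hi'⟩⟩ heq
    simp only [Subtype.mk.injEq, Prod.mk.injEq] at heq ⊢
    have hw0 : 0 < w.length := hwl ▸ hk
    have hw0' : 0 < w'.length := hwl' ▸ hk
    have haw : Aper w := lyn_aper hwL
    have haw' : Aper w' := lyn_aper hwL'
    have h1 := List.rotate_eq_iff.mp heq.symm
    rw [List.length_rotate, List.rotate_rotate] at h1
    set j := (i + (w.length - i' % w.length)) % w.length with hj
    have h2 : w' = w.rotate j := by rw [hj, List.rotate_mod]; exact h1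
    have hjk : j < w.length := Nat.mod_lt _ hw0
    rcases Nat.eq_zero_or_pos j with hj0 | hjpos
    · rw [hj0, List.rotate_zero] at h2
      subst h2
      refine ⟨rfl, Fin.ext ?_⟩
      exact aper_rotate_inj hw0 haw (by rw [hwl]; exact hi) (by rw [hwl]; exact hi') heq
    · exfalso
      have hxw : List.Lex (· < ·) w w' := by
        rw [h2]
        exact lyn_lex_rotate hwL hjpos hjk
      have h3 : w = w'.rotate (w'.length - j % w'.length) :=
        List.rotate_eq_iff.mp h2.symm
      have hj2 : 0 < w'.length - j % w'.length := by
        have : j % w'.length < w'.length := Nat.mod_lt _ hw0'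
        omega
      have hjw' : j < w'.length := by rw [hwl']; rw [hwl] at hjk; exact hjk
      have hj3 : w'.length - j % w'.length < w'.length := by
        rw [Nat.mod_eq_of_lt hjw']
        omega
      have hxw' : List.Lex (· < ·) w' w := by
        rw [h3]
        exact lyn_lex_rotate hwL' hj2 hj3
      exact (List.Lex.asymm (· < ·)).asymm _ _ hxw hxw'
  · rintro ⟨x, hxl, hxa⟩
    have hx0 : 0 < x.length := hxl ▸ hk
    set F : Finset (List α) := (Finset.range k).image (fun j => x.rotate j) with hF
    have hne : F.Nonempty := ⟨x.rotate 0, Finset.mem_image.mpr ⟨0, Finset.mem_range.mpr hk, rfl⟩⟩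
    set v := F.min' hne with hv
    obtain ⟨j₀, _, hvr⟩ := Finset.mem_image.mp (F.min'_mem hne)
    rw [← hv] at hvr
    have hvl : v.length = k := by rw [← hvr, List.length_rotate, hxl]
    have hv0 : 0 < v.length := hvl ▸ hk
    have hva : Aper v := hvr ▸ aper_rotate hx0 hxa j₀
    have hmin : ∀ i, ¬ List.Lex (· < ·) (v.rotate i) v := by
      intro i hlex
      have hmem : v.rotate i ∈ F := by
        refine Finset.mem_image.mpr ⟨(j₀ + i) % k, Finset.mem_range.mpr (Nat.mod_lt _ hk), ?_⟩
        rw [← hxl, List.rotate_mod, ← hvr, List.rotate_rotate]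
      have hle := F.min'_le _ hmem
      rw [← hv] at hle
      exact absurd hle (not_le_of_gt (hlex : v.rotate i < v))
    have hvL : Lyn v := lyn_of_min hva hmin
    have hxv : x = v.rotate (v.length - j₀ % v.length) := List.rotate_eq_iff.mp hvr
    refine ⟨⟨⟨v, hvl, hvL⟩, ⟨(v.length - j₀ % v.length) % k, Nat.mod_lt _ hk⟩⟩, ?_⟩
    simp only [Subtype.mk.injEq]
    rw [← hvl, List.rotate_mod, ← hxv]

theorem sig_ext {k : ℕ}
    {a b : Σ d : {d : ℕ // d ∈ k.divisors}, {u : List α // u.length = d.1 ∧ Aper u}}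
    (h1 : a.1.1 = b.1.1) (h2 : a.2.1 = b.2.1) : a = b := by
  obtain ⟨⟨d, hd⟩, ⟨u, hu⟩⟩ := a
  obtain ⟨⟨d', hd'⟩, ⟨u', hu'⟩⟩ := b
  dsimp at h1 h2
  subst h1
  subst h2
  rfl

/-- decomposition of a word into its primitive root -/
noncomputable def rootEquiv (k : ℕ) (hk : 0 < k) :
    {x : List α // x.length = k} ≃
      Σ d : {d : ℕ // d ∈ k.divisors}, {u : List α // u.length = d.1 ∧ Aper u} where
  toFun x :=
    ⟨⟨minper x.1, Nat.mem_divisors.mpr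
        ⟨by simpa [x.2] using minper_dvd_length (x := x.1) (by rw [x.2]; exact hk), hk.ne'⟩⟩,
      ⟨x.1.take (minper x.1), length_take_minper (by rw [x.2]; exact hk),
        aper_take_minper (by rw [x.2]; exact hk)⟩⟩
  invFun p :=
    ⟨npow p.2.1 (k / p.1.1), by
      have hd := Nat.mem_divisors.mp p.1.2
      rw [length_npow, p.2.2.1, Nat.div_mul_cancel hd.1]⟩
  left_inv x := by
    obtain ⟨x, hxl⟩ := x
    subst hxl
    have hx : 0 < x.length := hk
    exact Subtype.ext (eq_npow_minper hx).symm
  right_inv p := by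
    obtain ⟨⟨d, hd⟩, ⟨u, hu1, hu2⟩⟩ := p
    have hd' := Nat.mem_divisors.mp hd
    have hdpos : 0 < d := Nat.pos_of_mem_divisors hd
    have hupos : 0 < u.length := hu1 ▸ hdpos
    have hm : 0 < k / d := Nat.div_pos (Nat.le_of_dvd hk hd'.1) hdpos
    have h1 : minper (npow u (k / d)) = d := by
      rw [minper_npow hupos hu2 hm, hu1]
    refine sig_ext h1 ?_
    show (npow u (k / d)).take (minper (npow u (k / d))) = u
    rw [minper_npow hupos hu2 hm]
    exact take_npow u _ hm


end StdAux

open StdAux in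
theorem finite_sub (q k : ℕ) (P : List (Fin q) → Prop) :
    Finite {x : List (Fin q) // x.length = k ∧ P x} := by
  apply Finite.of_injective
    (fun x : {x : List (Fin q) // x.length = k ∧ P x} =>
      fun i : Fin k => x.1.get ⟨i.1, by rw [x.2.1]; exact i.2⟩)
  intro a b h
  apply Subtype.ext
  apply List.ext_get (by rw [a.2.1, b.2.1])
  intro n h1 h2
  have h3 := congrFun h ⟨n, by rw [← a.2.1]; exact h1⟩
  simpa using h3

def listFinEquiv (q k : ℕ) : {x : List (Fin q) // x.length = k} ≃ (Fin k → Fin q) where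
  toFun x i := x.1.get ⟨i.1, by rw [x.2]; exact i.2⟩
  invFun f := ⟨List.ofFn f, List.length_ofFn (f := f)⟩
  left_inv x := by
    apply Subtype.ext
    apply List.ext_get (by simp [x.2])
    intro n h1 h2
    simp
  right_inv f := by
    funext i
    simp

theorem card_W (q k : ℕ) : Nat.card {x : List (Fin q) // x.length = k} = q ^ k := by
  rw [Nat.card_congr (listFinEquiv q k), Nat.card_fun]
  simp [Nat.card_eq_fintype_card]

open StdAux in
theorem card_sum (q : ℕ) : ∀ n, 0 < n →
    ∑ d ∈ n.divisors, Nat.card {u : List (Fin q) // u.length = d ∧ Aper u} = q ^ n := by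
  intro n hn
  classical
  letI : ∀ i : {d // d ∈ n.divisors}, Fintype {u : List (Fin q) // u.length = i.1 ∧ Aper u} :=
    fun i => @Fintype.ofFinite _ (finite_sub q i.1 _)
  have h1 := Nat.card_congr (rootEquiv (α := Fin q) n hn)
  rw [card_W] at h1
  rw [h1, Nat.card_eq_fintype_card, Fintype.card_sigma]
  simp only [← Nat.card_eq_fintype_card]
  exact (Finset.sum_coe_sort n.divisors
    (fun d => Nat.card {u : List (Fin q) // u.length = d ∧ Aper u})).symm

open StdAux in
theorem card_aper (q k : ℕ) (hk : 0 < k) :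
    Nat.card {x : List (Fin q) // x.length = k ∧ Aper x} =
      k * Nat.card {I : List (Fin q) // I.length = k ∧ Lyn I} := by
  have h := Nat.card_congr (Equiv.ofBijective _ (lyn_prod_bij (α := Fin q) hk)).symm
  rw [h, Nat.card_prod, Nat.card_eq_fintype_card (α := Fin k), Fintype.card_fin, mul_comm]


open StdAux

/-- A sequence `I = (i_1,…,i_k)` with entries in `{1,…,q}` is standard (Lyndon) if it is
strictly lexicographically smaller than each of its proper suffixes. -/
def IsStd {q : ℕ} (I : List (Fin q)) : Prop :=
  ∀ s, 0 < s → s < I.length → List.Lex (· < ·) I (I.drop s)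

/-- The number of standard sequences of length `k` equals the Witt number
`N_k = (1/k) ∑_{d ∣ k} μ(k/d) q^d`. -/
theorem stmt9 (q k : ℕ) (hk : 1 ≤ k) :
    (k : ℤ) * (Nat.card {I : List (Fin q) // I.length = k ∧ IsStd I} : ℤ) =
      ∑ d ∈ Nat.divisors k, ArithmeticFunction.moebius (k / d) * (q : ℤ) ^ d := by
  classical
  have hsum : ∀ n > 0, ∑ d ∈ Nat.divisors n,
      ((Nat.card {u : List (Fin q) // u.length = d ∧ Aper u} : ℤ)) = (q : ℤ) ^ n := by
    intro n hn
    rw [← Nat.cast_pow, ← card_sum q n hn, Nat.cast_sum]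
  have hinv := (ArithmeticFunction.sum_eq_iff_sum_smul_moebius_eq (R := ℤ)
    (f := fun d => (Nat.card {u : List (Fin q) // u.length = d ∧ Aper u} : ℤ))
    (g := fun n => (q : ℤ) ^ n)).mp hsum k hk
  rw [← Nat.map_div_left_divisors, Finset.sum_map] at hinv
  simp only [Function.Embedding.coeFn_mk, smul_eq_mul] at hinv
  change ∑ x ∈ k.divisors, ArithmeticFunction.moebius (k / x) * (q : ℤ) ^ x = _ at hinv
  have hstd : Nat.card {I : List (Fin q) // I.length = k ∧ IsStd I}
      = Nat.card {I : List (Fin q) // I.length = k ∧ Lyn I} := rfl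
  rw [hstd, hinv, card_aper q k hk]
  push_cast
  ring
end

section
/- Let G = F/F_k for F free of rank q and k ≥ 2. Every j-fold Massey product ⟨α_{i_1},...,α_{i_j}⟩ of the abelianization 1-cocycles α_i with j < k vanishes in H^2(G;ℤ): concretely, for each subword (i_s,...,i_t) with t - s + 1 < k, the Massey-product 2-cocycle determined by the Magnus defining system a_{s,t} = c_{i_s⋯i_t} is a coboundary, namely the coboundary of the 1-cochain c_{i_s⋯i_t} : F/F_k → ℤ. -/
noncomputable section

lemma ncMonomial_append (q : ℕ) (l l' : List (Fin q)) :
    ncMonomial q (l ++ l') = ncMonomial q l * ncMonomial q l' := by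
  simp [ncMonomial, List.map_append, List.prod_append]

lemma span_ncMonomial (q : ℕ) :
    Submodule.span ℤ (Set.range (ncMonomial q)) = ⊤ := by
  rw [eq_top_iff]
  rintro a -
  induction a using FreeAlgebra.induction with
  | grade0 r =>
      have h : (algebraMap ℤ (FreeAlgebra ℤ (Fin q)) r) = r • ncMonomial q [] := by
        simp [ncMonomial, Algebra.algebraMap_eq_smul_one]
      rw [h]
      exact Submodule.smul_mem _ _ (Submodule.subset_span ⟨[], rfl⟩)
  | grade1 i =>
      exact Submodule.subset_span ⟨[i], by simp [ncMonomial]⟩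
  | add a b ha hb => exact add_mem ha hb
  | mul a b ha hb =>
      have h1 : a * b ∈ Submodule.span ℤ (Set.range (ncMonomial q)) *
          Submodule.span ℤ (Set.range (ncMonomial q)) := Submodule.mul_mem_mul ha hb
      erw [Submodule.span_mul_span] at h1
      refine Submodule.span_le.2 ?_ h1
      rintro _ ⟨x, ⟨l, rfl⟩, y, ⟨l', rfl⟩, rfl⟩
      exact Submodule.subset_span ⟨l ++ l', ncMonomial_append q l l'⟩

lemma span_mkMonomial (q k : ℕ) :
    Submodule.span ℤ
      (Set.range (fun L => RingQuot.mkRingHom (degRel q k) (ncMonomial q L))) = ⊤ := by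
  let f : FreeAlgebra ℤ (Fin q) →ₗ[ℤ] MagnusRing q k :=
    (RingQuot.mkRingHom (degRel q k)).toAddMonoidHom.toIntLinearMap
  have hsurj : Function.Surjective f := RingQuot.mkRingHom_surjective _
  have h1 : (Set.range (fun L => RingQuot.mkRingHom (degRel q k) (ncMonomial q L)))
      = f '' (Set.range (ncMonomial q)) := by
    rw [← Set.range_comp]; rfl
  rw [h1, ← Submodule.map_span, span_ncMonomial, Submodule.map_top,
    LinearMap.range_eq_top.2 hsurj]

lemma coeff_mkMonomial (q k : ℕ) (coeff : List (Fin q) → MagnusRing q k →+ ℤ)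
    (hcoeff : ∀ L L' : List (Fin q), L.length < k → L'.length < k →
      coeff L (RingQuot.mkRingHom (degRel q k) (ncMonomial q L')) =
        if L = L' then 1 else 0)
    (L : List (Fin q)) (hL : L.length < k) (J : List (Fin q)) :
    coeff L (RingQuot.mkRingHom (degRel q k) (ncMonomial q J)) =
      if L = J then 1 else 0 := by
  by_cases hJ : J.length < k
  · exact hcoeff L J hL hJ
  · have h0 : RingQuot.mkRingHom (degRel q k) (ncMonomial q J) = 0 := by
      have := RingQuot.mkRingHom_rel (r := degRel q k)
        (⟨rfl, J, le_of_not_gt hJ, rfl⟩ : degRel q k (ncMonomial q J) 0)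
      simpa using this
    have hne : L ≠ J := by
      intro h; rw [h] at hL; omega
    rw [h0, map_zero]
    simp [hne]

lemma coeff_mul (q k : ℕ) (coeff : List (Fin q) → MagnusRing q k →+ ℤ)
    (hcoeff : ∀ L L' : List (Fin q), L.length < k → L'.length < k →
      coeff L (RingQuot.mkRingHom (degRel q k) (ncMonomial q L')) =
        if L = L' then 1 else 0)
    (L : List (Fin q)) (hL : L.length < k) (a b : MagnusRing q k) :
    coeff L (a * b) = ∑ n ∈ Finset.range (L.length + 1),
      coeff (L.take n) a * coeff (L.drop n) b := by
  let Φ : MagnusRing q k →ₗ[ℤ] MagnusRing q k →ₗ[ℤ] ℤ :=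
    (LinearMap.mul ℤ (MagnusRing q k)).compr₂ (coeff L).toIntLinearMap
  let Ψ : MagnusRing q k →ₗ[ℤ] MagnusRing q k →ₗ[ℤ] ℤ :=
    ∑ n ∈ Finset.range (L.length + 1),
      (LinearMap.mul ℤ ℤ).compl₁₂ (coeff (L.take n)).toIntLinearMap
        (coeff (L.drop n)).toIntLinearMap
  have hΦΨ : Φ = Ψ := by
    apply LinearMap.ext_on_range (span_mkMonomial q k)
    intro L'
    apply LinearMap.ext_on_range (span_mkMonomial q k)
    intro L''
    simp only [Φ, Ψ, LinearMap.compr₂_apply, LinearMap.mul_apply', LinearMap.compl₁₂_apply,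
      LinearMap.sum_apply, AddMonoidHom.coe_toIntLinearMap]
    rw [← map_mul, ← ncMonomial_append]
    rw [coeff_mkMonomial q k coeff hcoeff L hL (L' ++ L'')]
    have ht : ∀ n : ℕ, (L.take n).length < k := by
      intro n; rw [List.length_take]; omega
    have hd : ∀ n : ℕ, (L.drop n).length < k := by
      intro n; rw [List.length_drop]; omega
    rw [Finset.sum_congr rfl (fun n _ => by
      rw [coeff_mkMonomial q k coeff hcoeff (L.take n) (ht n) L',
        coeff_mkMonomial q k coeff hcoeff (L.drop n) (hd n) L''])]
    by_cases h : L = L' ++ L''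
    · subst h
      rw [Finset.sum_eq_single L'.length]
      · simp [List.take_left, List.drop_left]
      · intro n hn hne
        have hn' : n ≤ L'.length + L''.length := by
          simpa [Nat.lt_succ_iff, List.length_append] using hn
        have hne' : (L' ++ L'').take n ≠ L' := by
          intro hEq
          apply hne
          have hlen := congrArg List.length hEq
          simpa [List.length_take, List.length_append, Nat.min_eq_left hn'] using hlen
        simp [hne']
      · intro hnot
        exact absurd (Finset.mem_range.2 (by simp [List.length_append])) hnot
    · rw [if_neg h]
      refine (Finset.sum_eq_zero ?_).symm
      intro n hn
      by_cases h1 : L.take n = L'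
      · by_cases h2 : L.drop n = L''
        · exact absurd (by rw [← h1, ← h2, List.take_append_drop]) h
        · simp [h2]
      · simp [h1]
  have := LinearMap.congr_fun (LinearMap.congr_fun hΦΨ a) b
  simpa [Φ, Ψ, LinearMap.compr₂_apply, LinearMap.mul_apply', LinearMap.compl₁₂_apply,
    LinearMap.sum_apply] using this

lemma coeff_nil_one (q k : ℕ) (hk : 1 ≤ k) (coeff : List (Fin q) → MagnusRing q k →+ ℤ)
    (hcoeff : ∀ L L' : List (Fin q), L.length < k → L'.length < k →
      coeff L (RingQuot.mkRingHom (degRel q k) (ncMonomial q L')) =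
        if L = L' then 1 else 0) :
    coeff [] (1 : MagnusRing q k) = 1 := by
  have h1 : (1 : MagnusRing q k) = RingQuot.mkRingHom (degRel q k) (ncMonomial q []) := by
    simp [ncMonomial]
  rw [h1, hcoeff [] [] (by simp; omega) (by simp; omega)]
  simp

lemma coeff_nil_M (q k : ℕ) (hk : 2 ≤ k)
    (M : FreeGroup (Fin q) →* MagnusRing q k)
    (hM : ∀ i, M (FreeGroup.of i) = 1 + MagnusX q k i)
    (coeff : List (Fin q) → MagnusRing q k →+ ℤ)
    (hcoeff : ∀ L L' : List (Fin q), L.length < k → L'.length < k →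
      coeff L (RingQuot.mkRingHom (degRel q k) (ncMonomial q L')) =
        if L = L' then 1 else 0) :
    ∀ x : FreeGroup (Fin q), coeff [] (M x) = 1 := by
  have hmul : ∀ a b : MagnusRing q k, coeff [] (a * b) = coeff [] a * coeff [] b := by
    intro a b
    simpa using coeff_mul q k coeff hcoeff [] (by simp; omega) a b
  have hone : coeff [] (1 : MagnusRing q k) = 1 := coeff_nil_one q k (by omega) coeff hcoeff
  have hof : ∀ i, coeff [] (M (FreeGroup.of i)) = 1 := by
    intro i
    have hX : MagnusX q k i = RingQuot.mkRingHom (degRel q k) (ncMonomial q [i]) := by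
      simp [MagnusX, ncMonomial]
    rw [hM i, map_add, hone, hX, hcoeff [] [i] (by simp; omega) (by simp; omega)]
    simp
  intro x
  induction x using FreeGroup.induction_on with
  | C1 => rw [map_one, hone]
  | of i => exact hof i
  | inv_of i _ =>
      have h1 : coeff [] (M ((FreeGroup.of i)⁻¹)) * coeff [] (M (FreeGroup.of i)) = 1 := by
        rw [← hmul, ← map_mul, inv_mul_cancel, map_one, hone]
      rw [hof i, mul_one] at h1
      exact h1
  | mul x y hx hy => rw [map_mul, hmul, hx, hy, mul_one]


/-- Vanishing of the lower Massey products on `F/F_k`: for any nonempty sequence `L` of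
length `< k` (e.g. a subword `(i_s,…,i_t)` with `t - s + 1 < k`), the Massey-product
2-cocycle of the Magnus defining system,
`(x,y) ↦ ∑_{r} c_{l_1⋯l_r}(x) c_{l_{r+1}⋯l_t}(y)`, is the coboundary of the 1-cochain
`c_L : F/F_k → ℤ` (with the convention `(∂f)(x,y) = f(xy) - f(x) - f(y)`). -/
theorem stmt13 (q k : ℕ) (hk : 1 ≤ k)
    (M : FreeGroup (Fin q) →* MagnusRing q k)
    (hM : ∀ i, M (FreeGroup.of i) = 1 + MagnusX q k i)
    (coeff : List (Fin q) → MagnusRing q k →+ ℤ)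
    (hcoeff : ∀ L L' : List (Fin q), L.length < k → L'.length < k →
      coeff L (RingQuot.mkRingHom (degRel q k) (ncMonomial q L')) =
        if L = L' then 1 else 0) :
    ∀ L : List (Fin q), L ≠ [] → L.length < k → ∀ x y : FreeGroup (Fin q),
      ∑ n ∈ Finset.Ico 1 L.length, coeff (L.take n) (M x) * coeff (L.drop n) (M y) =
        coeff L (M (x * y)) - coeff L (M x) - coeff L (M y) := by
  intro L hne hLk x y
  have hm : 1 ≤ L.length := List.length_pos_iff.mpr hne
  have hk2 : 2 ≤ k := by omega
  have hxy : coeff L (M (x * y)) = ∑ n ∈ Finset.range (L.length + 1),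
      coeff (L.take n) (M x) * coeff (L.drop n) (M y) := by
    rw [map_mul]
    exact coeff_mul q k coeff hcoeff L hLk (M x) (M y)
  rw [hxy, Finset.sum_range_succ, Finset.range_eq_Ico,
    Finset.sum_eq_sum_Ico_succ_bot hm]
  rw [List.take_zero, List.drop_zero, List.take_length, List.drop_length,
    coeff_nil_M q k hk2 M hM coeff hcoeff x, coeff_nil_M q k hk2 M hM coeff hcoeff y]
  ring
end
end

section
/- Let F be free of rank q, k ≥ 2, and fix s ∈ {1,...,q} and a sequence (i_1,...,i_k). The map Γ : (F/F_k)^3 → ℤ defined by Γ(x,y,z) = c_s(x) · Σ_{j=1}^{k-1} c_{i_1⋯i_j}(y) c_{i_{j+1}⋯i_k}(z) is a group 3-cocycle on F/F_k with trivial ℤ coefficients, representing the cup product α_s ⌣ ⟨α_{i_1},...,α_{i_k}⟩. -/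
noncomputable section

/-- The 3-cochain `Γ(x,y,z) = c_s(x) · ∑_{j=1}^{k-1} c_{i_1⋯i_j}(y) c_{i_{j+1}⋯i_k}(z)`
built from the Magnus coefficients. -/
def gammaCochain (q k : ℕ) (M : FreeGroup (Fin q) →* MagnusRing q k)
    (coeff : List (Fin q) → MagnusRing q k →+ ℤ) (s : Fin q) (I : List (Fin q))
    (x y z : FreeGroup (Fin q)) : ℤ :=
  coeff [s] (M x) * ∑ n ∈ Finset.Ico 1 k, coeff (I.take n) (M y) * coeff (I.drop n) (M z)

namespace Stmt18Aux

variable (q k : ℕ)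

/-- abbreviation for the quotient map -/
def mk' : FreeAlgebra ℤ (Fin q) →+* MagnusRing q k := RingQuot.mkRingHom (degRel q k)

lemma ncMonomial_nil : ncMonomial q [] = 1 := rfl

lemma ncMonomial_single (i : Fin q) : ncMonomial q [i] = FreeAlgebra.ι ℤ i := by
  simp [ncMonomial]

lemma ncMonomial_append (l₁ l₂ : List (Fin q)) :
    ncMonomial q (l₁ ++ l₂) = ncMonomial q l₁ * ncMonomial q l₂ := by
  simp [ncMonomial]

lemma mk'_long (l : List (Fin q)) (hl : k ≤ l.length) : mk' q k (ncMonomial q l) = 0 := by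
  have : mk' q k (ncMonomial q l) = mk' q k 0 :=
    RingQuot.mkRingHom_rel ⟨rfl, l, hl, rfl⟩
  simpa using this

/-- the set of monomial images -/
def S : Set (MagnusRing q k) := Set.range (fun l => mk' q k (ncMonomial q l))

lemma freeAlgebra_span :
    Submodule.span ℤ (Set.range (ncMonomial q)) = ⊤ := by
  rw [eq_top_iff]
  rintro a -
  induction a using FreeAlgebra.induction with
  | grade0 r =>
      have : (algebraMap ℤ (FreeAlgebra ℤ (Fin q)) r) = r • ncMonomial q [] := by
        simp [ncMonomial_nil, Algebra.algebraMap_eq_smul_one]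
      rw [this]
      exact Submodule.smul_mem _ _ (Submodule.subset_span ⟨[], rfl⟩)
  | grade1 x =>
      exact Submodule.subset_span ⟨[x], ncMonomial_single q x⟩
  | mul a b ha hb =>
      have h := Submodule.mul_mem_mul ha hb
      erw [Submodule.span_mul_span] at h
      refine Submodule.span_le.mpr ?_ h
      rintro x ⟨y, ⟨l₁, rfl⟩, z, ⟨l₂, rfl⟩, rfl⟩
      exact Submodule.subset_span ⟨l₁ ++ l₂, ncMonomial_append q l₁ l₂⟩
  | add a b ha hb => exact Submodule.add_mem _ ha hb

lemma span_S : Submodule.span ℤ (S q k) = ⊤ := by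
  have hsurj : Function.Surjective (mk' q k) := RingQuot.mkRingHom_surjective _
  have : S q k = (mk' q k).toIntAlgHom.toLinearMap '' (Set.range (ncMonomial q)) := by
    rw [← Set.range_comp]; rfl
  rw [this, ← Submodule.map_span, freeAlgebra_span, Submodule.map_top, eq_top_iff]
  intro x _
  rcases hsurj x with ⟨y, rfl⟩
  exact Set.mem_range_self y

/-- filtration by degree -/
def A (n : ℕ) : Submodule ℤ (MagnusRing q k) :=
  Submodule.span ℤ {x | ∃ l : List (Fin q), n ≤ l.length ∧ x = mk' q k (ncMonomial q l)}

lemma A_zero : A q k 0 = ⊤ := by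
  rw [← span_S q k]
  unfold A
  congr 1
  ext x
  constructor
  · rintro ⟨l, -, rfl⟩; exact ⟨l, rfl⟩
  · rintro ⟨l, rfl⟩; exact ⟨l, Nat.zero_le _, rfl⟩

lemma A_mono {m n : ℕ} (h : m ≤ n) : A q k n ≤ A q k m :=
  Submodule.span_mono (fun x => by rintro ⟨l, hl, rfl⟩; exact ⟨l, h.trans hl, rfl⟩)

lemma A_mul {m n : ℕ} {a b : MagnusRing q k} (ha : a ∈ A q k m) (hb : b ∈ A q k n) :
    a * b ∈ A q k (m + n) := by
  have h := Submodule.mul_mem_mul ha hb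
  unfold A at h ⊢
  erw [Submodule.span_mul_span] at h
  refine Submodule.span_le.mpr ?_ h
  rintro x ⟨y, ⟨l₁, hl₁, rfl⟩, z, ⟨l₂, hl₂, rfl⟩, rfl⟩
  refine Submodule.subset_span ⟨l₁ ++ l₂, ?_, ?_⟩
  · simpa using Nat.add_le_add hl₁ hl₂
  · simp [ncMonomial_append, map_mul]

lemma A_k_eq_bot : A q k k = ⊥ := by
  rw [eq_bot_iff]
  refine Submodule.span_le.mpr ?_
  rintro x ⟨l, hl, rfl⟩
  simp [mk'_long q k l hl]

variable (M : FreeGroup (Fin q) →* MagnusRing q k)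

/-- the dimension subgroup filtration -/
def D (n : ℕ) : Subgroup (FreeGroup (Fin q)) where
  carrier := {g | M g - 1 ∈ A q k n}
  one_mem' := by simp
  mul_mem' := by
    intro a b ha hb
    have h : M (a * b) - 1 = (M a - 1) * (M b - 1) + ((M a - 1) + (M b - 1)) := by
      rw [map_mul]; simp only [mul_sub, sub_mul, mul_one, one_mul]; abel
    rw [Set.mem_setOf_eq, h]
    exact Submodule.add_mem _ (A_mono q k (Nat.le_add_right n n) (A_mul q k ha hb))
      (Submodule.add_mem _ ha hb)
  inv_mem' := by
    intro a ha
    have hinv : M a * M a⁻¹ = 1 := by rw [← map_mul, mul_inv_cancel, map_one]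
    have h : M a⁻¹ - 1 = -((M a - 1) * M a⁻¹) := by
      have h2 : (M a - 1) * M a⁻¹ = M a * M a⁻¹ - M a⁻¹ := by
        simp only [sub_mul, one_mul]
      rw [h2, hinv]; abel
    rw [Set.mem_setOf_eq, h]
    refine Submodule.neg_mem _ ?_
    have : M a⁻¹ ∈ A q k 0 := by rw [A_zero]; trivial
    simpa using A_mul q k ha this

open scoped commutatorElement in
lemma D_comm (m n : ℕ) : ⁅D q k M m, D q k M n⁆ ≤ D q k M (m + n) := by
  rw [Subgroup.commutator_le]
  intro g hg h hh
  have hainv : M g * M g⁻¹ = 1 := by rw [← map_mul, mul_inv_cancel, map_one]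
  have hbinv : M h * M h⁻¹ = 1 := by rw [← map_mul, mul_inv_cancel, map_one]
  show M ⁅g, h⁆ - 1 ∈ A q k (m + n)
  have hcomm : ⁅g, h⁆ = g * h * g⁻¹ * h⁻¹ := rfl
  have key : M ⁅g, h⁆ - 1 = (M g * M h - M h * M g) * (M g⁻¹ * M h⁻¹) := by
    rw [hcomm, map_mul, map_mul, map_mul]
    have h2 : M h * M g * (M g⁻¹ * M h⁻¹) = 1 := by
      calc M h * M g * (M g⁻¹ * M h⁻¹) = M h * (M g * M g⁻¹) * M h⁻¹ := by
            simp only [mul_assoc]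
      _ = 1 := by rw [hainv, mul_one, hbinv]
    simp only [sub_mul, h2, mul_assoc]
  rw [key]
  have h1 : M g * M h - M h * M g = (M g - 1) * (M h - 1) - (M h - 1) * (M g - 1) := by
    simp only [mul_sub, sub_mul, mul_one, one_mul]; abel
  have hmem : M g * M h - M h * M g ∈ A q k (m + n) := by
    rw [h1]
    refine Submodule.sub_mem _ (A_mul q k hg hh) ?_
    rw [Nat.add_comm m n]
    exact A_mul q k hh hg
  have htop : M g⁻¹ * M h⁻¹ ∈ A q k 0 := by rw [A_zero]; trivial
  simpa using A_mul q k hmem htop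

lemma mem_D_one (hM : ∀ i, M (FreeGroup.of i) = 1 + MagnusX q k i) (g : FreeGroup (Fin q)) :
    g ∈ D q k M 1 := by
  induction g using FreeGroup.induction_on with
  | C1 => exact one_mem _
  | of i =>
      show M (FreeGroup.of i) - 1 ∈ A q k 1
      rw [hM i]
      have : (1 : MagnusRing q k) + MagnusX q k i - 1 = mk' q k (ncMonomial q [i]) := by
        rw [ncMonomial_single]; simp [MagnusX, mk']
      rw [this]
      exact Submodule.subset_span ⟨[i], le_refl _, rfl⟩
  | inv_of i h => exact inv_mem h
  | mul x y hx hy => exact mul_mem hx hy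

lemma lcs_le_D (hM : ∀ i, M (FreeGroup.of i) = 1 + MagnusX q k i) (n : ℕ) :
    Subgroup.lowerCentralSeries (⊤ : Subgroup (FreeGroup (Fin q))) n ≤ D q k M (n + 1) := by
  induction n with
  | zero => exact fun g _ => mem_D_one q k M hM g
  | succ n ih =>
      have heq : Subgroup.lowerCentralSeries (⊤ : Subgroup (FreeGroup (Fin q))) (n + 1) =
          ⁅Subgroup.lowerCentralSeries (⊤ : Subgroup (FreeGroup (Fin q))) n, (⊤ : Subgroup (FreeGroup (Fin q)))⁆ := rfl
      rw [heq]
      calc ⁅Subgroup.lowerCentralSeries (⊤ : Subgroup (FreeGroup (Fin q))) n, (⊤ : Subgroup (FreeGroup (Fin q)))⁆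
          ≤ ⁅D q k M (n + 1), D q k M 1⁆ :=
            Subgroup.commutator_mono ih (fun g _ => mem_D_one q k M hM g)
        _ ≤ D q k M (n + 1 + 1) := D_comm q k M (n + 1) 1

lemma M_eq_one (hk : 2 ≤ k) (hM : ∀ i, M (FreeGroup.of i) = 1 + MagnusX q k i)
    {w : FreeGroup (Fin q)} (hw : w ∈ Subgroup.lowerCentralSeries (⊤ : Subgroup (FreeGroup (Fin q))) (k - 1)) :
    M w = 1 := by
  have h := lcs_le_D q k M hM (k - 1) hw
  have hk1 : k - 1 + 1 = k := by omega
  rw [hk1] at h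
  have : M w - 1 ∈ A q k k := h
  rw [A_k_eq_bot] at this
  exact sub_eq_zero.mp ((Submodule.mem_bot ℤ).mp this)

section Coeff

variable (coeff : List (Fin q) → MagnusRing q k →+ ℤ)

lemma coeff_mon
    (hcoeff : ∀ L L' : List (Fin q), L.length < k → L'.length < k →
      coeff L (RingQuot.mkRingHom (degRel q k) (ncMonomial q L')) = if L = L' then 1 else 0)
    (L L' : List (Fin q)) (hL : L.length < k) :
    coeff L (mk' q k (ncMonomial q L')) = if L = L' then 1 else 0 := by
  by_cases h : L'.length < k
  · exact hcoeff L L' hL h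
  · rw [mk'_long q k L' (le_of_not_gt h), map_zero, if_neg (by rintro rfl; omega)]

lemma coeff_mon_mul
    (hcoeff : ∀ L L' : List (Fin q), L.length < k → L'.length < k →
      coeff L (RingQuot.mkRingHom (degRel q k) (ncMonomial q L')) = if L = L' then 1 else 0)
    (L l₁ l₂ : List (Fin q)) (hL : L.length < k) :
    coeff L (mk' q k (ncMonomial q l₁) * mk' q k (ncMonomial q l₂)) =
      ∑ j ∈ Finset.range (L.length + 1),
        coeff (L.take j) (mk' q k (ncMonomial q l₁)) *
          coeff (L.drop j) (mk' q k (ncMonomial q l₂)) := by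
  have hlt1 : ∀ j, (L.take j).length < k := fun j => by
    rw [List.length_take]; omega
  have hlt2 : ∀ j, (L.drop j).length < k := fun j => by
    rw [List.length_drop]; omega
  rw [← map_mul, ← ncMonomial_append, coeff_mon q k coeff hcoeff _ _ hL]
  by_cases hP : L = l₁ ++ l₂
  · subst hP
    rw [if_pos rfl]
    have hsum : ∀ j ∈ Finset.range ((l₁ ++ l₂).length + 1),
        coeff ((l₁ ++ l₂).take j) (mk' q k (ncMonomial q l₁)) *
          coeff ((l₁ ++ l₂).drop j) (mk' q k (ncMonomial q l₂)) =
        if j = l₁.length then 1 else 0 := by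
      intro j hj
      have hj' : j ≤ (l₁ ++ l₂).length := Nat.lt_succ_iff.mp (Finset.mem_range.mp hj)
      by_cases hje : j = l₁.length
      · subst hje
        have hlen := hL
        rw [List.length_append] at hlen
        rw [List.take_left, List.drop_left,
          coeff_mon q k coeff hcoeff l₁ l₁ (by omega),
          coeff_mon q k coeff hcoeff l₂ l₂ (by omega), if_pos rfl, if_pos rfl, if_pos rfl]
        norm_num
      · rw [if_neg hje, coeff_mon q k coeff hcoeff _ _ (hlt1 _), if_neg, zero_mul]
        intro hcon
        apply hje
        have := congrArg List.length hcon
        rw [List.length_take] at this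
        omega
    rw [Finset.sum_congr rfl hsum, Finset.sum_ite_eq' (Finset.range ((l₁ ++ l₂).length + 1))]
    rw [if_pos]
    rw [Finset.mem_range, List.length_append]
    omega
  · rw [if_neg hP]
    symm
    apply Finset.sum_eq_zero
    intro j hj
    rw [coeff_mon q k coeff hcoeff _ _ (hlt1 _), coeff_mon q k coeff hcoeff _ _ (hlt2 _)]
    by_cases h1 : L.take j = l₁
    · by_cases h2 : L.drop j = l₂
      · exfalso
        apply hP
        conv_lhs => rw [← List.take_append_drop j L]
        rw [h1, h2]
      · rw [if_neg h2, mul_zero]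
    · rw [if_neg h1, zero_mul]

lemma coeff_mul (hcoeff : ∀ L L' : List (Fin q), L.length < k → L'.length < k →
      coeff L (RingQuot.mkRingHom (degRel q k) (ncMonomial q L')) = if L = L' then 1 else 0)
    (L : List (Fin q)) (hL : L.length < k) (a b : MagnusRing q k) :
    coeff L (a * b) =
      ∑ j ∈ Finset.range (L.length + 1), coeff (L.take j) a * coeff (L.drop j) b := by
  have ha : a ∈ Submodule.span ℤ (S q k) := by rw [span_S]; trivial
  have hb : b ∈ Submodule.span ℤ (S q k) := by rw [span_S]; trivial
  induction ha using Submodule.span_induction with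
  | mem a hma =>
      obtain ⟨l₁, rfl⟩ := hma
      induction hb using Submodule.span_induction with
      | mem b hmb =>
          obtain ⟨l₂, rfl⟩ := hmb
          exact coeff_mon_mul q k coeff hcoeff L l₁ l₂ hL
      | zero => simp
      | add b c hb hc ihb ihc =>
          rw [mul_add, map_add, ihb, ihc, ← Finset.sum_add_distrib]
          exact Finset.sum_congr rfl fun j _ => by rw [map_add]; ring
      | smul r b hb ih =>
          rw [mul_smul_comm, map_zsmul, ih, Finset.smul_sum]
          exact Finset.sum_congr rfl fun j _ => by rw [map_zsmul]; simp; ring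
  | zero => simp
  | add a c ha hc iha ihc =>
      rw [add_mul, map_add, iha, ihc, ← Finset.sum_add_distrib]
      exact Finset.sum_congr rfl fun j _ => by rw [map_add]; ring
  | smul r a ha ih =>
      rw [smul_mul_assoc, map_zsmul, ih, Finset.smul_sum]
      exact Finset.sum_congr rfl fun j _ => by rw [map_zsmul]; simp; ring

lemma coeff_one_nil (hcoeff : ∀ L L' : List (Fin q), L.length < k → L'.length < k →
      coeff L (RingQuot.mkRingHom (degRel q k) (ncMonomial q L')) = if L = L' then 1 else 0)
    (h0 : 0 < k) : coeff [] (1 : MagnusRing q k) = 1 := by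
  have : (1 : MagnusRing q k) = mk' q k (ncMonomial q []) := by
    rw [ncMonomial_nil, map_one]
  rw [this, coeff_mon q k coeff hcoeff _ _ (by simpa using h0), if_pos rfl]

lemma coeff_one_ne (hcoeff : ∀ L L' : List (Fin q), L.length < k → L'.length < k →
      coeff L (RingQuot.mkRingHom (degRel q k) (ncMonomial q L')) = if L = L' then 1 else 0)
    (L : List (Fin q)) (hL : L.length < k) (hne : L ≠ []) :
    coeff L (1 : MagnusRing q k) = 0 := by
  have : (1 : MagnusRing q k) = mk' q k (ncMonomial q []) := by
    rw [ncMonomial_nil, map_one]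
  rw [this, coeff_mon q k coeff hcoeff _ _ hL, if_neg hne]

lemma coeff_nil_mul
    (hcoeff : ∀ L L' : List (Fin q), L.length < k → L'.length < k →
      coeff L (RingQuot.mkRingHom (degRel q k) (ncMonomial q L')) = if L = L' then 1 else 0)
    (h0 : 0 < k) (a b : MagnusRing q k) :
    coeff [] (a * b) = coeff [] a * coeff [] b := by
  rw [coeff_mul q k coeff hcoeff [] (by simpa using h0) a b]
  simp

lemma c0 (hk : 2 ≤ k) (M : FreeGroup (Fin q) →* MagnusRing q k)
    (hM : ∀ i, M (FreeGroup.of i) = 1 + MagnusX q k i)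
    (hcoeff : ∀ L L' : List (Fin q), L.length < k → L'.length < k →
      coeff L (RingQuot.mkRingHom (degRel q k) (ncMonomial q L')) = if L = L' then 1 else 0)
    (x : FreeGroup (Fin q)) : coeff [] (M x) = 1 := by
  have h0 : 0 < k := by omega
  induction x using FreeGroup.induction_on with
  | C1 => rw [map_one]; exact coeff_one_nil q k coeff hcoeff h0
  | of i =>
      show coeff [] (M (FreeGroup.of i)) = 1
      rw [hM i, map_add, coeff_one_nil q k coeff hcoeff h0]
      have : MagnusX q k i = mk' q k (ncMonomial q [i]) := by
        rw [ncMonomial_single]; rfl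
      rw [this, coeff_mon q k coeff hcoeff _ _ (by simpa using h0), if_neg (by simp)]
      norm_num
  | inv_of i ih =>
      have h1 : coeff [] (M (FreeGroup.of i)) * coeff [] (M (FreeGroup.of i)⁻¹) = 1 := by
        rw [← coeff_nil_mul q k coeff hcoeff h0, ← map_mul, mul_inv_cancel, map_one,
          coeff_one_nil q k coeff hcoeff h0]
      rw [ih, one_mul] at h1
      exact h1
  | mul a b iha ihb =>
      rw [map_mul, coeff_nil_mul q k coeff hcoeff h0, iha, ihb, one_mul]

lemma cs_add (hk : 2 ≤ k) (M : FreeGroup (Fin q) →* MagnusRing q k)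
    (hM : ∀ i, M (FreeGroup.of i) = 1 + MagnusX q k i)
    (hcoeff : ∀ L L' : List (Fin q), L.length < k → L'.length < k →
      coeff L (RingQuot.mkRingHom (degRel q k) (ncMonomial q L')) = if L = L' then 1 else 0)
    (s : Fin q) (x y : FreeGroup (Fin q)) :
    coeff [s] (M (x * y)) = coeff [s] (M x) + coeff [s] (M y) := by
  rw [map_mul, coeff_mul q k coeff hcoeff [s] (by simp; omega) (M x) (M y)]
  simp only [List.length_singleton]
  rw [Finset.sum_range_succ, Finset.sum_range_one]
  simp only [List.take_zero, List.drop_zero, List.take_succ_cons, List.take_nil,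
    List.drop_succ_cons, List.drop_nil]
  rw [c0 q k coeff hk M hM hcoeff x, c0 q k coeff hk M hM hcoeff y]
  ring

/-- the term `c_{I[0,a)}(y) c_{I[a,b)}(z) c_{I[b,k)}(v)` -/
def Tterm (M : FreeGroup (Fin q) →* MagnusRing q k) (I : List (Fin q))
    (y z v : FreeGroup (Fin q)) (a b : ℕ) : ℤ :=
  coeff (I.take a) (M y) * (coeff ((I.drop a).take (b - a)) (M z) * coeff (I.drop b) (M v))

lemma B_cocycle (hk : 2 ≤ k) (M : FreeGroup (Fin q) →* MagnusRing q k)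
    (hM : ∀ i, M (FreeGroup.of i) = 1 + MagnusX q k i)
    (hcoeff : ∀ L L' : List (Fin q), L.length < k → L'.length < k →
      coeff L (RingQuot.mkRingHom (degRel q k) (ncMonomial q L')) = if L = L' then 1 else 0)
    (I : List (Fin q)) (hI : I.length = k) (y z v : FreeGroup (Fin q)) :
    (∑ n ∈ Finset.Ico 1 k, coeff (I.take n) (M (y * z)) * coeff (I.drop n) (M v))
      - (∑ n ∈ Finset.Ico 1 k, coeff (I.take n) (M y) * coeff (I.drop n) (M (z * v)))
      + (∑ n ∈ Finset.Ico 1 k, coeff (I.take n) (M y) * coeff (I.drop n) (M z))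
    = ∑ n ∈ Finset.Ico 1 k, coeff (I.take n) (M z) * coeff (I.drop n) (M v) := by
  have hc0 : ∀ x, coeff [] (M x) = 1 := c0 q k coeff hk M hM hcoeff
  -- Step 1 : expand the first sum
  have e1 : ∀ b ∈ Finset.Ico 1 k,
      coeff (I.take b) (M (y * z)) * coeff (I.drop b) (M v)
        = coeff (I.take b) (M z) * coeff (I.drop b) (M v)
          + ∑ a ∈ Finset.Ico 1 (b + 1), Tterm q k coeff M I y z v a b := by
    intro b hb
    obtain ⟨hb1, hb2⟩ := Finset.mem_Ico.mp hb
    have hlen : (I.take b).length = b := by rw [List.length_take]; omega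
    rw [map_mul, coeff_mul q k coeff hcoeff _ (by rw [hlen]; omega) (M y) (M z), hlen,
      Finset.sum_mul]
    have e2 : ∀ m ∈ Finset.range (b + 1),
        coeff ((I.take b).take m) (M y) * coeff ((I.take b).drop m) (M z)
            * coeff (I.drop b) (M v)
          = Tterm q k coeff M I y z v m b := by
      intro m hm
      have hm' : m ≤ b := by
        have := Finset.mem_range.mp hm; omega
      rw [List.take_take, Nat.min_eq_left hm', List.drop_take, Tterm, mul_assoc]
    rw [Finset.sum_congr rfl e2, Finset.sum_range_succ']
    have e3 : ∑ i ∈ Finset.range b, Tterm q k coeff M I y z v (i + 1) b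
        = ∑ a ∈ Finset.Ico 1 (b + 1), Tterm q k coeff M I y z v a b := by
      rw [Finset.sum_Ico_eq_sum_range]
      simp only [Nat.add_sub_cancel]
      exact Finset.sum_congr rfl fun i _ => by rw [Nat.add_comm 1 i]
    rw [e3]
    have e4 : Tterm q k coeff M I y z v 0 b
        = coeff (I.take b) (M z) * coeff (I.drop b) (M v) := by
      rw [Tterm, List.take_zero, List.drop_zero, Nat.sub_zero, hc0 y, one_mul]
    rw [e4, add_comm]
  -- Step 2 : expand the second sum
  have e5 : ∀ a ∈ Finset.Ico 1 k,
      coeff (I.take a) (M y) * coeff (I.drop a) (M (z * v))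
        = (∑ b ∈ Finset.Ico a k, Tterm q k coeff M I y z v a b)
          + coeff (I.take a) (M y) * coeff (I.drop a) (M z) := by
    intro a ha
    obtain ⟨ha1, ha2⟩ := Finset.mem_Ico.mp ha
    have hlen : (I.drop a).length = k - a := by rw [List.length_drop, hI]
    rw [map_mul, coeff_mul q k coeff hcoeff _ (by rw [hlen]; omega) (M z) (M v), hlen,
      Finset.mul_sum]
    have e6 : ∀ j ∈ Finset.range (k - a + 1),
        coeff (I.take a) (M y)
            * (coeff ((I.drop a).take j) (M z) * coeff ((I.drop a).drop j) (M v))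
          = Tterm q k coeff M I y z v a (a + j) := by
      intro j hj
      rw [List.drop_drop, Tterm, Nat.add_sub_cancel_left]
    rw [Finset.sum_congr rfl e6]
    have e7 : ∑ j ∈ Finset.range (k - a + 1), Tterm q k coeff M I y z v a (a + j)
        = ∑ b ∈ Finset.Ico a (k + 1), Tterm q k coeff M I y z v a b := by
      rw [Finset.sum_Ico_eq_sum_range]
      rw [show k + 1 - a = k - a + 1 by omega]
    rw [e7, Finset.sum_Ico_succ_top (by omega : a ≤ k)]
    have e8 : Tterm q k coeff M I y z v a k
        = coeff (I.take a) (M y) * coeff (I.drop a) (M z) := by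
      rw [Tterm, show (I.drop a).take (k - a) = I.drop a from
          List.take_of_length_le (le_of_eq hlen),
        show I.drop k = [] from by rw [← hI]; exact List.drop_length, hc0 v, mul_one]
    rw [e8]
  rw [Finset.sum_congr rfl e1, Finset.sum_congr rfl e5, Finset.sum_add_distrib,
    Finset.sum_add_distrib, Finset.sum_Ico_Ico_comm 1 k (Tterm q k coeff M I y z v)]
  ring

end Coeff

end Stmt18Aux

/-- `Γ(x,y,z) = c_s(x) · ∑_j c_{i_1⋯i_j}(y) c_{i_{j+1}⋯i_k}(z)` is well defined on
`(F/F_k)³` (invariant under right multiplication of each argument by `F_k`) and is a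
group 3-cocycle with trivial `ℤ` coefficients, representing
`α_s ⌣ ⟨α_{i_1},…,α_{i_k}⟩`. -/
theorem stmt18 (q k : ℕ) (hk : 2 ≤ k)
    (M : FreeGroup (Fin q) →* MagnusRing q k)
    (hM : ∀ i, M (FreeGroup.of i) = 1 + MagnusX q k i)
    (coeff : List (Fin q) → MagnusRing q k →+ ℤ)
    (hcoeff : ∀ L L' : List (Fin q), L.length < k → L'.length < k →
      coeff L (RingQuot.mkRingHom (degRel q k) (ncMonomial q L')) =
        if L = L' then 1 else 0)
    (s : Fin q) (I : List (Fin q)) (hI : I.length = k) :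
    (∀ x y z : FreeGroup (Fin q), ∀ w ∈ Subgroup.lowerCentralSeries (⊤ : Subgroup (FreeGroup (Fin q))) (k - 1),
        gammaCochain q k M coeff s I (x * w) y z = gammaCochain q k M coeff s I x y z ∧
        gammaCochain q k M coeff s I x (y * w) z = gammaCochain q k M coeff s I x y z ∧
        gammaCochain q k M coeff s I x y (z * w) = gammaCochain q k M coeff s I x y z) ∧
    (∀ x y z v : FreeGroup (Fin q),
        gammaCochain q k M coeff s I y z v - gammaCochain q k M coeff s I (x * y) z v
          + gammaCochain q k M coeff s I x (y * z) v
          - gammaCochain q k M coeff s I x y (z * v)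
          + gammaCochain q k M coeff s I x y z = 0) := by
  constructor
  · intro x y z w hw
    have hw1 : M w = 1 := Stmt18Aux.M_eq_one q k M hk hM hw
    refine ⟨?_, ?_, ?_⟩ <;> simp [gammaCochain, map_mul, hw1]
  · intro x y z v
    unfold gammaCochain
    have hcs := Stmt18Aux.cs_add q k coeff hk M hM hcoeff s x y
    have hB := Stmt18Aux.B_cocycle q k coeff hk M hM hcoeff I hI y z v
    rw [hcs]
    linear_combination coeff [s] (M x) * hB
end
end
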